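/- arXiv:1604.05540 — 5 statements merged into one kernel-verified Lean document; each statement's English description precedes it below -/
import Mathlib

section
/- Assume the Feller index satisfies ν = 2κλ/θ² > 1/2 and that ρ < 0. Let f : ℝ → ℝ be measurable with sup_{x∈ℝ} |f(x)·exp(−x)| < ∞. Then there exist ε > 0, δ > 0 and C < ∞ (depending only on κ, λ, θ, ρ, μ, T, x₀, v₀ and f) such that for every partition 0 = t₀ < t₁ < ⋯ < t_N = T of [0,T] with mesh Δ < δ one has E|f(x_N)|^{1+ε} ≤ C. -/
/-!
Write `v_n` for the Milstein scheme and `Δ_n = t_{n+1} - t_n`. Solving the drift-implicit step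
for `θ √v_n Δ_nW` shows that for `ρ ≤ 0` the correlated part `ρ ∑ √v_n Δ_nW` of `x_N` is at most
a constant plus `-ρθ/4 ∑ (Δ_nW)²`: the remaining terms telescope, and `v_N ≥ 0` because `ν > 1/2`.
Since `|f x| ≤ K eˣ`, it suffices to bound `E exp(p x_N)` for `p = 1 + ρ²/2`. Conditionally on
`W`, the `B`-part of `x_N` is centred Gaussian with variance `(1 - ρ²) ∑ v_n Δ_n`, and
`p²(1 - ρ²) ≤ p` lets the drift `-½ ∑ v_n Δ_n` absorb its exponential moment. What remains is
`E exp(-pρθ/4 ∑ (Δ_nW)²)`, a product of independent Gaussian moments, each at most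
`exp(-pρθ Δ_n / 2)` once the mesh is below `1 / (-pρθ)`.
-/

open MeasureTheory ProbabilityTheory
open scoped ENNReal NNReal

noncomputable section

variable {Ω : Type*} [MeasurableSpace Ω]

/-- A standard Brownian motion (indexed by all of `ℝ`; only nonnegative times matter):
it starts at `0`, has Gaussian increments with the correct variance, and has independent
increments. -/
structure IsBrownian (P : Measure Ω) (W : ℝ → Ω → ℝ) : Prop where
  meas : ∀ s : ℝ, Measurable (W s)
  start : ∀ ω, W 0 ω = 0
  gauss : ∀ s t : ℝ, 0 ≤ s → s ≤ t →
    Measure.map (fun ω => W t ω - W s ω) P = gaussianReal 0 (Real.toNNReal (t - s))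
  indep : ∀ u : ℕ → ℝ, Monotone u →
    iIndepFun (fun k ω => W (u (k + 1)) ω - W (u k) ω) P

/-- A partition `0 = t₀ < t₁ < ⋯ < t_N = T` of `[0, T]`. -/
structure IsPartition (t : ℕ → ℝ) (N : ℕ) (T : ℝ) : Prop where
  zero : t 0 = 0
  last : t N = T
  lt : ∀ k < N, t k < t (k + 1)

/-- The mesh `Δ = max_{1 ≤ k ≤ N} (t_k - t_{k-1})` of a partition. -/
def mesh (t : ℕ → ℝ) (N : ℕ) : ℝ := ⨆ k ∈ Finset.range N, (t (k + 1) - t k)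

/-- The drift-implicit Milstein scheme `v_n` for the CIR process (closed form). -/
def milstein (κ lam θ v₀ : ℝ) (t : ℕ → ℝ) (W : ℝ → Ω → ℝ) : ℕ → Ω → ℝ
  | 0 => fun _ => v₀
  | n + 1 => fun ω =>
      (1 / (1 + κ * (t (n + 1) - t n))) *
        ((Real.sqrt (milstein κ lam θ v₀ t W n ω)
            + (θ / 2) * (W (t (n + 1)) ω - W (t n) ω)) ^ 2
          + (κ * lam - θ ^ 2 / 4) * (t (n + 1) - t n))

/-- `n(s)`: the index of the largest partition point `≤ s`. -/
def nIdx (t : ℕ → ℝ) (N : ℕ) (s : ℝ) : ℕ := Nat.findGreatest (fun n => t n ≤ s) N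

/-- `η(s)`: the largest partition point `≤ s`. -/
def eta (t : ℕ → ℝ) (N : ℕ) (s : ℝ) : ℝ := t (nIdx t N s)

/-- `ṽ_s`: the interpolation of the Milstein scheme before the implicit-drift division. -/
def tildeV (κ lam θ v₀ : ℝ) (t : ℕ → ℝ) (N : ℕ) (W : ℝ → Ω → ℝ) (s : ℝ) (ω : Ω) : ℝ :=
  milstein κ lam θ v₀ t W (nIdx t N s) ω + κ * lam * (s - eta t N s)
    + θ * Real.sqrt (milstein κ lam θ v₀ t W (nIdx t N s) ω) * (W s ω - W (eta t N s) ω)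
    + (θ ^ 2 / 4) * ((W s ω - W (eta t N s) ω) ^ 2 - (s - eta t N s))

/-- `v̂_s`: the continuous-time interpolation of the Milstein scheme. -/
def hatV (κ lam θ v₀ : ℝ) (t : ℕ → ℝ) (N : ℕ) (W : ℝ → Ω → ℝ) (s : ℝ) (ω : Ω) : ℝ :=
  tildeV κ lam θ v₀ t N W s ω / (1 + κ * (s - eta t N s))

/-- Euler scheme `x_n` for the log-price in the (log-)Heston model. -/
def eulerX (κ lam θ v₀ x₀ μ ρ : ℝ) (t : ℕ → ℝ) (W B : ℝ → Ω → ℝ) : ℕ → Ω → ℝ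
  | 0 => fun _ => x₀
  | n + 1 => fun ω =>
      eulerX κ lam θ v₀ x₀ μ ρ t W B n ω
        + (μ - (1 / 2) * milstein κ lam θ v₀ t W n ω) * (t (n + 1) - t n)
        + Real.sqrt (milstein κ lam θ v₀ t W n ω) *
            (ρ * (W (t (n + 1)) ω - W (t n) ω)
              + Real.sqrt (1 - ρ ^ 2) * (B (t (n + 1)) ω - B (t n) ω))

open Real Finset

lemma lintegral_ofReal_exp_mul_gaussianReal (c : ℝ) (v : ℝ≥0) :
    ∫⁻ x, ENNReal.ofReal (exp (c * x)) ∂gaussianReal 0 v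
      = ENNReal.ofReal (exp (v * c ^ 2 / 2)) := by
  have hmgf := mgf_gaussianReal (p := gaussianReal 0 v) (X := id) Measure.map_id c
  rw [zero_mul, zero_add] at hmgf
  rw [← hmgf, ← ofReal_integral_eq_lintegral_ofReal (integrable_exp_mul_gaussianReal c)
    (ae_of_all _ fun x => (exp_pos _).le)]
  rfl

lemma lintegral_ofReal_exp_mul_sq_gaussianReal {c : ℝ} {v : ℝ≥0} (h : 2 * c * v < 1) :
    ∫⁻ x, ENNReal.ofReal (exp (c * x ^ 2)) ∂gaussianReal 0 v
      = ENNReal.ofReal (√(1 - 2 * c * v))⁻¹ := by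
  rcases eq_or_ne v 0 with rfl | hv
  · simp [gaussianReal_zero_var]
  have hv' : (0 : ℝ) < v := by positivity
  set b : ℝ := (1 - 2 * c * v) / (2 * v) with hb
  have hb0 : 0 < b := div_pos (by linarith) (by positivity)
  have hdensity : ∀ x, gaussianPDF 0 v x * ENNReal.ofReal (exp (c * x ^ 2))
      = ENNReal.ofReal (√(2 * π * v))⁻¹ * ENNReal.ofReal (exp (-b * x ^ 2)) := by
    intro x
    rw [gaussianPDF, ← ENNReal.ofReal_mul (gaussianPDFReal_nonneg _ _ _),
      ← ENNReal.ofReal_mul (by positivity), gaussianPDFReal, mul_assoc, ← exp_add]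
    congr 3
    rw [hb]
    field_simp
    ring
  rw [gaussianReal_of_var_ne_zero _ hv, lintegral_withDensity_eq_lintegral_mul _
    (measurable_gaussianPDF _ _) (by fun_prop)]
  simp only [Pi.mul_apply, hdensity]
  rw [lintegral_const_mul' _ _ ENNReal.ofReal_ne_top,
    ← ofReal_integral_eq_lintegral_ofReal (integrable_exp_neg_mul_sq hb0)
      (ae_of_all _ fun x => (exp_pos _).le),
    integral_gaussian b, ← ENNReal.ofReal_mul (by positivity), ← sqrt_inv, ← sqrt_inv,
    ← sqrt_mul (by positivity)]
  congr 2
  rw [hb]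
  field_simp

lemma inv_sqrt_one_sub_le_exp {u : ℝ} (hu : 0 ≤ u) (hu' : 2 * u ≤ 1) : (√(1 - u))⁻¹ ≤ exp u := by
  rw [← sqrt_inv, ← sqrt_sq (exp_pos u).le, sq, ← exp_add]
  gcongr
  rw [inv_le_iff_one_le_mul₀ (by linarith)]
  nlinarith [add_one_le_exp (u + u)]

lemma sub_le_mesh {t : ℕ → ℝ} {N k : ℕ} (hk : k < N) : t (k + 1) - t k ≤ mesh t N :=
  le_ciSup₂ (f := fun k (_ : k ∈ range N) => t (k + 1) - t k)
    ((((range N).finite_toSet.image fun k => t (k + 1) - t k).bddAbove).mono <| by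
      rintro _ ⟨_, ⟨k, rfl⟩, ⟨hk, rfl⟩⟩
      exact ⟨k, hk, rfl⟩) k (mem_range.2 hk)

lemma ENNReal.ofReal_exp_sum {ι : Type*} (s : Finset ι) (f : ι → ℝ) :
    ENNReal.ofReal (exp (∑ i ∈ s, f i)) = ∏ i ∈ s, ENNReal.ofReal (exp (f i)) := by
  rw [exp_sum, ENNReal.ofReal_prod_of_nonneg fun i _ => (exp_pos _).le]

lemma ProbabilityTheory.IndepFun.lintegral_comp_prodMk {α β : Type*} [MeasurableSpace α]
    [MeasurableSpace β] {P : Measure Ω} [IsFiniteMeasure P] {X : Ω → α} {Y : Ω → β}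
    (hXY : IndepFun X Y P) (hX : Measurable X) (hY : Measurable Y) {F : α × β → ℝ≥0∞}
    (hF : Measurable F) :
    ∫⁻ ω, F (X ω, Y ω) ∂P = ∫⁻ ω, ∫⁻ ω', F (X ω, Y ω') ∂P ∂P := by
  calc ∫⁻ ω, F (X ω, Y ω) ∂P = ∫⁻ q, F q ∂(P.map fun ω => (X ω, Y ω)) :=
        (lintegral_map hF (hX.prodMk hY)).symm
    _ = ∫⁻ x, ∫⁻ y, F (x, y) ∂(P.map Y) ∂(P.map X) := by
        rw [(indepFun_iff_map_prod_eq_prod_map_map hX.aemeasurable hY.aemeasurable).1 hXY,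
          lintegral_prod _ hF.aemeasurable]
    _ = _ := by
        rw [lintegral_map hF.lintegral_prod_right' hX]
        exact lintegral_congr fun ω => lintegral_map (hF.comp measurable_prodMk_left) hY

section Brownian

variable {P : Measure Ω} {W : ℝ → Ω → ℝ} {t : ℕ → ℝ} {N : ℕ} {T : ℝ}

lemma IsPartition.monotone_min (hpart : IsPartition t N T) : Monotone fun k => t (min k N) := by
  refine monotone_nat_of_le_succ fun k => ?_
  rcases lt_or_ge k N with hk | hk
  · rw [min_eq_left hk.le, min_eq_left hk]
    exact (hpart.lt k hk).le
  · rw [min_eq_right hk, min_eq_right (by omega)]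

lemma IsPartition.nonneg (hpart : IsPartition t N T) {n : ℕ} (hn : n ≤ N) : 0 ≤ t n := by
  simpa [hpart.zero, min_eq_left hn] using hpart.monotone_min (Nat.zero_le n)

lemma IsPartition.sum_range_sub (hpart : IsPartition t N T) :
    ∑ n ∈ range N, (t (n + 1) - t n) = T := by
  rw [Finset.sum_range_sub, hpart.last, hpart.zero, sub_zero]

lemma IsBrownian.lintegral_exp_sum_increments (hW : IsBrownian P W)
    (hpart : IsPartition t N T) (F : ℕ → ℝ → ℝ) (hF : ∀ n, Measurable (F n)) :
    ∫⁻ ω, ENNReal.ofReal (exp (∑ n ∈ range N, F n (W (t (n + 1)) ω - W (t n) ω))) ∂P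
      = ∏ n ∈ range N,
          ∫⁻ x, ENNReal.ofReal (exp (F n x)) ∂gaussianReal 0 (t (n + 1) - t n).toNNReal := by
  -- the increments of the partition frozen after `N`, to which `IsBrownian.indep` applies
  set g : ℕ → Ω → ℝ := fun k ω => W (t (min (k + 1) N)) ω - W (t (min k N)) ω
  have hg : ∀ n ∈ range N, g n = fun ω => W (t (n + 1)) ω - W (t n) ω := fun n hn => by
    have hn := mem_range.1 hn
    simp only [g, min_eq_left hn.le, min_eq_left (Nat.succ_le_of_lt hn)]
  have hFexp : ∀ n, Measurable fun x => ENNReal.ofReal (exp (F n x)) :=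
    fun n => (hF n).exp.ennreal_ofReal
  have hgmeas : ∀ n, Measurable (g n) := fun n => (hW.meas _).sub (hW.meas _)
  calc _ = ∫⁻ ω, ∏ n ∈ range N, ENNReal.ofReal (exp (F n (g n ω))) ∂P := by
        refine lintegral_congr fun ω => ?_
        rw [ENNReal.ofReal_exp_sum]
        exact prod_congr rfl fun n hn => by rw [hg n hn]
    _ = ∏ n ∈ range N, ∫⁻ ω, ENNReal.ofReal (exp (F n (g n ω))) ∂P :=
        lintegral_prod_eq_prod_lintegral_of_indepFun _ _
          ((hW.indep _ hpart.monotone_min).comp _ hFexp) fun n => (hFexp n).comp (hgmeas n)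
    _ = _ := prod_congr rfl fun n hn => by
        have hn' := mem_range.1 hn
        rw [← hW.gauss _ _ (hpart.nonneg hn'.le) (hpart.lt n hn').le,
          ← hg n hn, lintegral_map (hFexp n) (hgmeas n)]

lemma IsBrownian.lintegral_exp_sum_mul_increments (hW : IsBrownian P W)
    (hpart : IsPartition t N T) (c : ℕ → ℝ) :
    ∫⁻ ω, ENNReal.ofReal (exp (∑ n ∈ range N, c n * (W (t (n + 1)) ω - W (t n) ω))) ∂P
      = ENNReal.ofReal (exp (∑ n ∈ range N, (t (n + 1) - t n) * c n ^ 2 / 2)) := by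
  rw [hW.lintegral_exp_sum_increments hpart (fun n x => c n * x) fun _ => by fun_prop,
    ENNReal.ofReal_exp_sum]
  refine prod_congr rfl fun n hn => ?_
  rw [lintegral_ofReal_exp_mul_gaussianReal,
    Real.coe_toNNReal _ (sub_nonneg.2 (hpart.lt n (mem_range.1 hn)).le)]

lemma IsBrownian.lintegral_exp_mul_sum_sq_increments_le (hW : IsBrownian P W)
    (hpart : IsPartition t N T) {c : ℝ} (hc : 0 ≤ c)
    (hmesh : 4 * c * mesh t N ≤ 1) :
    ∫⁻ ω, ENNReal.ofReal (exp (c * ∑ n ∈ range N, (W (t (n + 1)) ω - W (t n) ω) ^ 2)) ∂P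
      ≤ ENNReal.ofReal (exp (2 * c * T)) := by
  simp only [mul_sum]
  rw [hW.lintegral_exp_sum_increments hpart (fun _ x => c * x ^ 2) fun _ => by fun_prop,
    ← hpart.sum_range_sub, mul_sum, ENNReal.ofReal_exp_sum]
  refine prod_le_prod' fun n hn => ?_
  have hn := mem_range.1 hn
  have hΔ : 0 ≤ t (n + 1) - t n := sub_nonneg.2 (hpart.lt n hn).le
  have := mul_le_mul_of_nonneg_left (sub_le_mesh (t := t) hn) (by positivity : 0 ≤ 4 * c)
  rw [lintegral_ofReal_exp_mul_sq_gaussianReal (by rw [Real.coe_toNNReal _ hΔ]; linarith),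
    Real.coe_toNNReal _ hΔ]
  exact ENNReal.ofReal_le_ofReal (inv_sqrt_one_sub_le_exp (by positivity) (by linarith))

lemma IsBrownian.lintegral_exp_drift_add_sum_mul_increments_le (hW : IsBrownian P W)
    (hpart : IsPartition t N T) {v : ℕ → ℝ} (hv : ∀ n < N, 0 ≤ v n) {p σ : ℝ} (hp : 0 ≤ p)
    (hσ : p * σ ^ 2 ≤ 1) (A : ℝ) :
    ∫⁻ ω, ENNReal.ofReal (exp (p * (A - 1 / 2 * ∑ n ∈ range N, v n * (t (n + 1) - t n)
        + ∑ n ∈ range N, σ * √(v n) * (W (t (n + 1)) ω - W (t n) ω)))) ∂P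
      ≤ ENNReal.ofReal (exp (p * A)) := by
  set S := ∑ n ∈ range N, v n * (t (n + 1) - t n)
  have hsplit : ∀ ω, ENNReal.ofReal (exp (p * (A - 1 / 2 * S
        + ∑ n ∈ range N, σ * √(v n) * (W (t (n + 1)) ω - W (t n) ω))))
      = ENNReal.ofReal (exp (p * (A - 1 / 2 * S)))
        * ENNReal.ofReal (exp (∑ n ∈ range N, p * σ * √(v n) * (W (t (n + 1)) ω - W (t n) ω))) := by
    intro ω
    rw [← ENNReal.ofReal_mul (exp_pos _).le, ← exp_add]
    simp only [mul_add, mul_sum, mul_assoc]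
  have hvariance : ∑ n ∈ range N, (t (n + 1) - t n) * (p * σ * √(v n)) ^ 2 / 2 ≤ p / 2 * S := by
    rw [mul_sum]
    refine sum_le_sum fun n hn => ?_
    have hn := mem_range.1 hn
    have hvΔ := mul_nonneg hp (mul_nonneg (hv n hn) (sub_nonneg.2 (hpart.lt n hn).le))
    rw [mul_pow, mul_pow, sq_sqrt (hv n hn)]
    nlinarith
  rw [lintegral_congr hsplit, lintegral_const_mul' _ _ ENNReal.ofReal_ne_top,
    hW.lintegral_exp_sum_mul_increments hpart, ← ENNReal.ofReal_mul (exp_pos _).le, ← exp_add]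
  exact ENNReal.ofReal_le_ofReal (exp_le_exp.2 (by linear_combination hvariance))

end Brownian

section Scheme

variable {Ω : Type*} {κ lam θ v₀ : ℝ} {t : ℕ → ℝ} {W : ℝ → Ω → ℝ}

lemma milstein_comp {Ω' : Type*} (φ : Ω' → Ω) (n : ℕ) (ω : Ω') :
    milstein κ lam θ v₀ t (fun s ω => W s (φ ω)) n ω = milstein κ lam θ v₀ t W n (φ ω) := by
  induction n with
  | zero => rfl
  | succ n ih => simp only [milstein, ih]

lemma measurable_milstein [MeasurableSpace Ω] (hW : ∀ s, Measurable (W s)) (n : ℕ) :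
    Measurable (milstein κ lam θ v₀ t W n) := by
  induction n with
  | zero => exact measurable_const
  | succ n ih =>
    simp only [milstein]
    have := hW (t (n + 1))
    have := hW (t n)
    fun_prop

lemma milstein_nonneg (hκ : 0 ≤ κ) (hfour : θ ^ 2 / 4 ≤ κ * lam) (hv₀ : 0 ≤ v₀) {n : ℕ}
    (ht : ∀ k < n, t k ≤ t (k + 1)) (ω : Ω) : 0 ≤ milstein κ lam θ v₀ t W n ω := by
  induction n with
  | zero => exact hv₀
  | succ n _ =>
    have hΔ : 0 ≤ t (n + 1) - t n := sub_nonneg.2 (ht n n.lt_succ_self)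
    simp only [milstein]
    have : 0 ≤ (κ * lam - θ ^ 2 / 4) * (t (n + 1) - t n) := mul_nonneg (by linarith) hΔ
    positivity

lemma one_add_mul_milstein_succ (hΔ : 1 + κ * (t (n + 1) - t n) ≠ 0) (ω : Ω) :
    (1 + κ * (t (n + 1) - t n)) * milstein κ lam θ v₀ t W (n + 1) ω
      = (√(milstein κ lam θ v₀ t W n ω) + θ / 2 * (W (t (n + 1)) ω - W (t n) ω)) ^ 2
        + (κ * lam - θ ^ 2 / 4) * (t (n + 1) - t n) := by
  simp only [milstein]
  field_simp

lemma mul_sqrt_milstein_mul_sub_le (hκ : 0 ≤ κ) {ρ : ℝ} (hρ : ρ ≤ 0) {n : ℕ}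
    (hΔ : t n ≤ t (n + 1)) {ω : Ω} (hv : 0 ≤ milstein κ lam θ v₀ t W n ω)
    (hv' : 0 ≤ milstein κ lam θ v₀ t W (n + 1) ω) :
    ρ * θ * (√(milstein κ lam θ v₀ t W n ω) * (W (t (n + 1)) ω - W (t n) ω))
      ≤ ρ * (milstein κ lam θ v₀ t W (n + 1) ω - milstein κ lam θ v₀ t W n ω)
        - ρ * θ ^ 2 / 4 * (W (t (n + 1)) ω - W (t n) ω) ^ 2
        - ρ * (κ * lam - θ ^ 2 / 4) * (t (n + 1) - t n) := by
  have hκΔ : 0 ≤ κ * (t (n + 1) - t n) := mul_nonneg hκ (sub_nonneg.2 hΔ)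
  have hsucc := one_add_mul_milstein_succ (lam := lam) (θ := θ) (v₀ := v₀) (W := W)
    (by positivity : 1 + κ * (t (n + 1) - t n) ≠ 0) ω
  have hdrift : ρ * (κ * (t (n + 1) - t n) * milstein κ lam θ v₀ t W (n + 1) ω) ≤ 0 :=
    mul_nonpos_of_nonpos_of_nonneg hρ (mul_nonneg hκΔ hv')
  linear_combination hdrift - ρ * hsucc - ρ * sq_sqrt hv

lemma mul_sum_sqrt_milstein_mul_sub_le (hκ : 0 ≤ κ) (hfour : θ ^ 2 / 4 ≤ κ * lam)
    (hv₀ : 0 ≤ v₀) {ρ : ℝ} (hρ : ρ ≤ 0) {N : ℕ} (ht : ∀ k < N, t k ≤ t (k + 1)) (ω : Ω) :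
    ρ * θ * ∑ n ∈ range N, √(milstein κ lam θ v₀ t W n ω) * (W (t (n + 1)) ω - W (t n) ω)
      ≤ -ρ * (v₀ + (κ * lam - θ ^ 2 / 4) * (t N - t 0))
        - ρ * θ ^ 2 / 4 * ∑ n ∈ range N, (W (t (n + 1)) ω - W (t n) ω) ^ 2 := by
  have hv : ∀ n ≤ N, 0 ≤ milstein κ lam θ v₀ t W n ω := fun n hn =>
    milstein_nonneg hκ hfour hv₀ (fun k hk => ht k (by omega)) ω
  calc _ ≤ ∑ n ∈ range N, (ρ * (milstein κ lam θ v₀ t W (n + 1) ω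
            - milstein κ lam θ v₀ t W n ω)
          - ρ * θ ^ 2 / 4 * (W (t (n + 1)) ω - W (t n) ω) ^ 2
          - ρ * (κ * lam - θ ^ 2 / 4) * (t (n + 1) - t n)) := by
        rw [mul_sum]
        refine sum_le_sum fun n hn => ?_
        have hn := mem_range.1 hn
        exact mul_sqrt_milstein_mul_sub_le hκ hρ (ht n hn) (hv n hn.le) (hv (n + 1) hn)
    _ = ρ * (milstein κ lam θ v₀ t W N ω - v₀)
          - ρ * θ ^ 2 / 4 * ∑ n ∈ range N, (W (t (n + 1)) ω - W (t n) ω) ^ 2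
          - ρ * (κ * lam - θ ^ 2 / 4) * (t N - t 0) := by
        rw [sum_sub_distrib, sum_sub_distrib, ← mul_sum, ← mul_sum, ← mul_sum,
          sum_range_sub (milstein κ lam θ v₀ t W · ω), sum_range_sub t]
        rfl
    _ ≤ _ := by nlinarith [mul_nonpos_of_nonpos_of_nonneg hρ (hv N le_rfl)]

lemma eulerX_eq (x₀ μ ρ : ℝ) (B : ℝ → Ω → ℝ) (N : ℕ) (ω : Ω) :
    eulerX κ lam θ v₀ x₀ μ ρ t W B N ω
      = x₀ + μ * (t N - t 0)
        - 1 / 2 * ∑ n ∈ range N, milstein κ lam θ v₀ t W n ω * (t (n + 1) - t n)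
        + ρ * ∑ n ∈ range N, √(milstein κ lam θ v₀ t W n ω) * (W (t (n + 1)) ω - W (t n) ω)
        + ∑ n ∈ range N,
            √(1 - ρ ^ 2) * √(milstein κ lam θ v₀ t W n ω) * (B (t (n + 1)) ω - B (t n) ω) := by
  induction N with
  | zero => simp [eulerX]
  | succ n ih =>
    simp only [eulerX, ih, sum_range_succ]
    ring

lemma eulerX_le {x₀ μ ρ T : ℝ} {N : ℕ} (hκ : 0 ≤ κ) (hθ : 0 < θ) (hfour : θ ^ 2 / 4 ≤ κ * lam)
    (hv₀ : 0 ≤ v₀) (hρ : ρ ≤ 0) (hpart : IsPartition t N T) (B : ℝ → Ω → ℝ) (ω : Ω) :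
    eulerX κ lam θ v₀ x₀ μ ρ t W B N ω
      ≤ x₀ + μ * T - ρ / θ * (v₀ + (κ * lam - θ ^ 2 / 4) * T)
        - ρ * θ / 4 * ∑ n ∈ range N, (W (t (n + 1)) ω - W (t n) ω) ^ 2
        - 1 / 2 * ∑ n ∈ range N, milstein κ lam θ v₀ t W n ω * (t (n + 1) - t n)
        + ∑ n ∈ range N,
            √(1 - ρ ^ 2) * √(milstein κ lam θ v₀ t W n ω) * (B (t (n + 1)) ω - B (t n) ω) := by
  have h := mul_sum_sqrt_milstein_mul_sub_le (W := W) hκ hfour hv₀ hρ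
    (fun k hk => (hpart.lt k hk).le) ω
  rw [hpart.last, hpart.zero, sub_zero] at h
  have hcorr : ρ * ∑ n ∈ range N, √(milstein κ lam θ v₀ t W n ω) * (W (t (n + 1)) ω - W (t n) ω)
      ≤ -ρ / θ * (v₀ + (κ * lam - θ ^ 2 / 4) * T)
        - ρ * θ / 4 * ∑ n ∈ range N, (W (t (n + 1)) ω - W (t n) ω) ^ 2 := by
    refine le_of_mul_le_mul_left ?_ hθ
    calc _ = _ := by ring
      _ ≤ _ := h
      _ = _ := by field_simp
  rw [eulerX_eq, hpart.last, hpart.zero, sub_zero]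
  linear_combination hcorr

end Scheme

theorem lintegral_exp_mul_eulerX_le {P : Measure Ω} [IsFiniteMeasure P] {W B : ℝ → Ω → ℝ}
    (hW : IsBrownian P W) (hB : IsBrownian P B)
    (hWB : IndepFun (fun ω s => W s ω) (fun ω s => B s ω) P)
    {κ lam θ v₀ x₀ μ ρ p T : ℝ} {t : ℕ → ℝ} {N : ℕ}
    (hκ : 0 ≤ κ) (hθ : 0 < θ) (hfour : θ ^ 2 / 4 ≤ κ * lam) (hv₀ : 0 ≤ v₀)
    (hρ₁ : -1 ≤ ρ) (hρ : ρ ≤ 0) (hp : 0 ≤ p) (hpρ : p * (1 - ρ ^ 2) ≤ 1)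
    (hpart : IsPartition t N T) (hmesh : -(p * ρ * θ) * mesh t N ≤ 1) :
    ∫⁻ ω, ENNReal.ofReal (exp (p * eulerX κ lam θ v₀ x₀ μ ρ t W B N ω)) ∂P
      ≤ ENNReal.ofReal (exp (p * (x₀ + μ * T - ρ / θ * (v₀ + (κ * lam - θ ^ 2 / 4) * T))
          - p * ρ * θ / 2 * T)) := by
  set C₀ := x₀ + μ * T - ρ / θ * (v₀ + (κ * lam - θ ^ 2 / 4) * T)
  set V : ℕ → (ℝ → ℝ) → ℝ := milstein κ lam θ v₀ t fun s w => w s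
  have hV : ∀ n ω, V n (fun s => W s ω) = milstein κ lam θ v₀ t W n ω :=
    fun n ω => (milstein_comp (fun ω s => W s ω) n ω).symm
  have hVmeas : ∀ n, Measurable (V n) := measurable_milstein fun s => measurable_pi_apply s
  -- the bound of `eulerX_le` as a function of the paths of `W` and `B`
  let F : (ℝ → ℝ) × (ℝ → ℝ) → ℝ≥0∞ := fun q =>
    ENNReal.ofReal (exp (p * (C₀ - ρ * θ / 4 * ∑ n ∈ range N, (q.1 (t (n + 1)) - q.1 (t n)) ^ 2
      - 1 / 2 * ∑ n ∈ range N, V n q.1 * (t (n + 1) - t n)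
      + ∑ n ∈ range N, √(1 - ρ ^ 2) * √(V n q.1) * (q.2 (t (n + 1)) - q.2 (t n)))))
  have hF : Measurable F := by fun_prop
  have hpt : ∀ ω, ENNReal.ofReal (exp (p * eulerX κ lam θ v₀ x₀ μ ρ t W B N ω))
      ≤ F ((fun s => W s ω), fun s => B s ω) := fun ω => by
    simp only [F, hV]
    gcongr
    exact eulerX_le hκ hθ hfour hv₀ hρ hpart B ω
  have hinner : ∀ ω, ∫⁻ ω', F ((fun s => W s ω), fun s => B s ω') ∂P
      ≤ ENNReal.ofReal (exp (p * (C₀ - ρ * θ / 4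
          * ∑ n ∈ range N, (W (t (n + 1)) ω - W (t n) ω) ^ 2))) := fun ω => by
    simpa only [F, hV] using hB.lintegral_exp_drift_add_sum_mul_increments_le hpart
      (fun n hn => milstein_nonneg hκ hfour hv₀ (fun k hk => (hpart.lt k (by omega)).le) ω) hp
      (by rwa [sq_sqrt (by nlinarith)]) _
  calc _ ≤ ∫⁻ ω, F ((fun s => W s ω), fun s => B s ω) ∂P := lintegral_mono hpt
    _ = ∫⁻ ω, ∫⁻ ω', F ((fun s => W s ω), fun s => B s ω') ∂P ∂P :=
        hWB.lintegral_comp_prodMk (measurable_pi_lambda _ hW.meas)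
          (measurable_pi_lambda _ hB.meas) hF
    _ ≤ ENNReal.ofReal (exp (p * C₀)) * ∫⁻ ω, ENNReal.ofReal
          (exp (-(p * ρ * θ / 4) * ∑ n ∈ range N, (W (t (n + 1)) ω - W (t n) ω) ^ 2)) ∂P := by
        rw [← lintegral_const_mul' _ _ ENNReal.ofReal_ne_top]
        refine lintegral_mono fun ω => (hinner ω).trans_eq ?_
        rw [← ENNReal.ofReal_mul (exp_pos _).le, ← exp_add]
        ring_nf
    _ ≤ ENNReal.ofReal (exp (p * C₀)) * ENNReal.ofReal (exp (2 * -(p * ρ * θ / 4) * T)) := by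
        gcongr
        exact hW.lintegral_exp_mul_sum_sq_increments_le hpart
          (by nlinarith [mul_nonpos_of_nonpos_of_nonneg hρ hθ.le]) (by linarith)
    _ = _ := by
        rw [← ENNReal.ofReal_mul (exp_pos _).le, ← exp_add]
        ring_nf

lemma abs_rpow_le_mul_exp {g : ℝ → ℝ} {K : ℝ} (hK : ∀ x, |g x * exp (-x)| ≤ K) {p : ℝ}
    (hp : 0 ≤ p) (x : ℝ) : |g x| ^ p ≤ K ^ p * exp (p * x) := by
  have hK0 : 0 ≤ K := (abs_nonneg _).trans (hK 0)
  have hgx : |g x| ≤ K * exp x := by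
    have := hK x
    rwa [abs_mul, abs_of_pos (exp_pos _), exp_neg, ← div_eq_mul_inv,
      div_le_iff₀ (exp_pos _)] at this
  calc |g x| ^ p ≤ (K * exp x) ^ p := by gcongr
    _ = K ^ p * exp (p * x) := by rw [mul_rpow hK0 (exp_pos x).le, ← exp_mul, mul_comm x]

theorem statement0_general
    {Ω : Type*} [MeasurableSpace Ω] (P : Measure Ω) [IsProbabilityMeasure P]
    (W B : ℝ → Ω → ℝ) (hW : IsBrownian P W) (hB : IsBrownian P B)
    (hWB : IndepFun (fun ω => fun s : ℝ => W s ω) (fun ω => fun s : ℝ => B s ω) P)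
    (κ lam θ v₀ T x₀ μ ρ : ℝ)
    (hκ : 0 < κ) (hθ : 0 < θ) (hv₀ : 0 < v₀)
    (hFeller : 1 / 2 < 2 * κ * lam / θ ^ 2) (hρ₁ : -1 ≤ ρ) (hρ : ρ < 0)
    (f : ℝ → ℝ) (hfgrowth : ∃ K : ℝ, ∀ x : ℝ, |f x * Real.exp (-x)| ≤ K) :
    ∃ ε δ C : ℝ, 0 < ε ∧ 0 < δ ∧
      ∀ (N : ℕ) (t : ℕ → ℝ), IsPartition t N T → mesh t N < δ →
        ∫⁻ ω, ENNReal.ofReal (|f (eulerX κ lam θ v₀ x₀ μ ρ t W B N ω)| ^ (1 + ε)) ∂P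
          ≤ ENNReal.ofReal C := by
  obtain ⟨K, hK⟩ := hfgrowth
  have hfour : θ ^ 2 / 4 ≤ κ * lam := by
    rw [lt_div_iff₀ (by positivity)] at hFeller
    linarith
  set p := 1 + ρ ^ 2 / 2 with hp_def
  have hρ2 : 0 < ρ ^ 2 / 2 := by nlinarith
  have hpρ : p * (1 - ρ ^ 2) ≤ 1 := by
    rw [hp_def]
    nlinarith [sq_nonneg (ρ ^ 2)]
  have hpρθ : 0 < -(p * ρ * θ) :=
    neg_pos.2 (mul_neg_of_neg_of_pos (mul_neg_of_pos_of_neg (by positivity) hρ) hθ)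
  refine ⟨ρ ^ 2 / 2, 1 / -(p * ρ * θ), K ^ p * exp (p * (x₀ + μ * T
      - ρ / θ * (v₀ + (κ * lam - θ ^ 2 / 4) * T)) - p * ρ * θ / 2 * T),
    hρ2, by positivity, fun N t hpart hmesh => ?_⟩
  have hmesh' : -(p * ρ * θ) * mesh t N ≤ 1 := by
    rw [lt_div_iff₀' hpρθ] at hmesh
    exact hmesh.le
  calc _ ≤ ∫⁻ ω, ENNReal.ofReal (K ^ p)
          * ENNReal.ofReal (exp (p * eulerX κ lam θ v₀ x₀ μ ρ t W B N ω)) ∂P :=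
        lintegral_mono fun ω => by
          rw [← ENNReal.ofReal_mul' (exp_pos _).le]
          exact ENNReal.ofReal_le_ofReal (abs_rpow_le_mul_exp hK (by positivity) _)
    _ ≤ _ := by
        rw [lintegral_const_mul' _ _ ENNReal.ofReal_ne_top, ENNReal.ofReal_mul' (exp_pos _).le]
        gcongr
        exact lintegral_exp_mul_eulerX_le hW hB hWB hκ.le hθ hfour hv₀.le hρ₁ hρ.le
          (by positivity) hpρ hpart hmesh'

/-- under the minimal Feller condition `ν = 2κλ/θ² > 1/2` and negative
correlation `ρ < 0`, for any measurable payoff `f` with `sup_x |f(x)e^{-x}| < ∞` there are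
`ε, δ > 0` and `C < ∞` such that for every partition of `[0,T]` with mesh `< δ` the Euler
scheme for the log-price satisfies `E|f(x_N)|^{1+ε} ≤ C`. -/
theorem statement0
    {Ω : Type*} [MeasurableSpace Ω] (P : Measure Ω) [IsProbabilityMeasure P]
    (W B : ℝ → Ω → ℝ) (hW : IsBrownian P W) (hB : IsBrownian P B)
    (hWB : IndepFun (fun ω => fun s : ℝ => W s ω) (fun ω => fun s : ℝ => B s ω) P)
    (κ lam θ v₀ T x₀ μ ρ : ℝ)
    (hκ : 0 < κ) (hlam : 0 < lam) (hθ : 0 < θ) (hv₀ : 0 < v₀) (hT : 0 < T)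
    (hFeller : 1 / 2 < 2 * κ * lam / θ ^ 2) (hρ₁ : -1 ≤ ρ) (hρ : ρ < 0)
    (f : ℝ → ℝ) (hf : Measurable f) (hfgrowth : ∃ K : ℝ, ∀ x : ℝ, |f x * Real.exp (-x)| ≤ K) :
    ∃ ε δ C : ℝ, 0 < ε ∧ 0 < δ ∧
      ∀ (N : ℕ) (t : ℕ → ℝ), IsPartition t N T → mesh t N < δ →
        ∫⁻ ω, ENNReal.ofReal (|f (eulerX κ lam θ v₀ x₀ μ ρ t W B N ω)| ^ (1 + ε)) ∂P
          ≤ ENNReal.ofReal C :=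
  statement0_general P W B hW hB hWB κ lam θ v₀ T x₀ μ ρ hκ hθ hv₀ hFeller hρ₁ hρ f hfgrowth

end
end

section
/- Assume ν = 2κλ/θ² > 1/2. For every q ≥ 1 there exists a constant C depending only on q, κ, λ, θ, T (in particular independent of v₀ and of the partition) such that for every partition 0 = t₀ < ⋯ < t_N = T one has sup_{t∈[0,T]} E[ ( v̂_{η(t)} / v̂_t )^q ] ≤ C. -/
open MeasureTheory ProbabilityTheory
open scoped ENNReal NNReal

noncomputable section

variable {Ω : Type*} [MeasurableSpace Ω]

/-! Write `c = κλ - θ²/4`, which is positive exactly when `ν > 1/2`, and `Δ = s - η(s)`.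
Like `v_{n+1}`, the interpolation is a perturbed square, `ṽ_s = (√v_n + (θ/2) w)² + cΔ` with
`w = W_s - W_{η(s)}`. Since `v_n ≤ 2 (√v_n + (θ/2) w)² + θ² w² / 2`, this gives
`v_n / v̂_s ≤ (1 + κT) (2 + θ² Z² / (2c))` with `Z = w / √Δ` standard normal, and the right-hand
side has finite `q`-th moment, independently of `v₀`, `Δ` and the partition. -/

lemma memLp_sq_gaussianReal (μ : ℝ) (v : ℝ≥0) {p : ℝ≥0∞} (hp : p ≠ ∞) :
    MemLp (fun x : ℝ => x ^ 2) p (gaussianReal μ v) := by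
  have h := (memLp_id_gaussianReal' (μ := μ) (v := v) (p * 2)
    (by simp [ENNReal.mul_eq_top, hp])).norm_rpow_div 2
  rw [ENNReal.mul_div_cancel_right (by norm_num) (by norm_num)] at h
  exact h.congr_norm (by fun_prop) (ae_of_all _ fun x => by simp)

lemma integrable_rpow_add_mul_sq_gaussianReal {a b q : ℝ} (ha : 0 ≤ a) (hb : 0 ≤ b) (hq : 0 ≤ q)
    (μ : ℝ) (v : ℝ≥0) : Integrable (fun z => (a + b * z ^ 2) ^ q) (gaussianReal μ v) := by
  have h := ((memLp_const a).add ((memLp_sq_gaussianReal μ v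
    (ENNReal.ofReal_ne_top (r := q))).const_mul b)).integrable_norm_rpow'
  refine h.congr (ae_of_all _ fun z => ?_)
  simp [Real.norm_of_nonneg (by positivity : 0 ≤ a + b * z ^ 2), ENNReal.toReal_ofReal hq]

lemma IsBrownian.map_increment_div_sqrt {P : Measure Ω} {W : ℝ → Ω → ℝ} (hW : IsBrownian P W)
    {r s : ℝ} (hr : 0 ≤ r) (hrs : r < s) :
    P.map (fun ω => (W s ω - W r ω) / √(s - r)) = gaussianReal 0 1 := by
  have hmeas : Measurable fun ω => W s ω - W r ω := (hW.meas s).sub (hW.meas r)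
  change P.map ((· / √(s - r)) ∘ fun ω => W s ω - W r ω) = _
  rw [← Measure.map_map (by fun_prop) hmeas, hW.gauss r s hr hrs.le, gaussianReal_map_div_const]
  congr 1
  · simp
  · ext
    simp [Real.sq_sqrt (sub_nonneg.2 hrs.le), max_eq_left (sub_nonneg.2 hrs.le), (sub_pos.2 hrs).ne']

lemma div_sq_add_le {v c Δ : ℝ} (hv : 0 ≤ v) (hc : 0 < c) (hΔ : 0 < Δ) (a w : ℝ) :
    v / ((√v + a * w) ^ 2 + c * Δ) ≤ 2 + 2 * a ^ 2 / c * (w / √Δ) ^ 2 := by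
  set X := √v + a * w
  have hv_le : v ≤ 2 * X ^ 2 + 2 * (a * w) ^ 2 := by
    have hv_eq : v = (X - a * w) ^ 2 := by simp [X, Real.sq_sqrt hv]
    nlinarith [sq_nonneg (X + a * w)]
  have hcΔ : 0 < c * Δ := mul_pos hc hΔ
  rw [div_pow, Real.sq_sqrt hΔ.le, div_le_iff₀ (by positivity)]
  calc v ≤ 2 * (X ^ 2 + c * Δ) + 2 * (a * w) ^ 2 := by linarith
    _ ≤ 2 * (X ^ 2 + c * Δ) + 2 * a ^ 2 / c * (w ^ 2 / Δ) * (X ^ 2 + c * Δ) := by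
      have : 2 * a ^ 2 / c * (w ^ 2 / Δ) * (c * Δ) = 2 * (a * w) ^ 2 := by field_simp
      nlinarith [mul_nonneg (by positivity : 0 ≤ 2 * a ^ 2 / c * (w ^ 2 / Δ)) (sq_nonneg X)]
    _ = _ := by ring

lemma IsPartition.strictMonoOn {t : ℕ → ℝ} {N : ℕ} {T : ℝ} (ht : IsPartition t N T) :
    StrictMonoOn t (Set.Iic N) :=
  strictMonoOn_Iic_of_lt_succ fun m hm => by simpa using ht.lt m hm

lemma eta_le {t : ℕ → ℝ} {N : ℕ} {T s : ℝ} (ht : IsPartition t N T) (hs : 0 ≤ s) :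
    eta t N s ≤ s :=
  Nat.findGreatest_spec (P := fun n => t n ≤ s) (Nat.zero_le N) (by rwa [ht.zero])

lemma eta_nonneg {t : ℕ → ℝ} {N : ℕ} {T : ℝ} (ht : IsPartition t N T) (s : ℝ) :
    0 ≤ eta t N s :=
  ht.zero ▸ ht.strictMonoOn.monotoneOn (Nat.zero_le N) (Nat.findGreatest_le N) (Nat.zero_le _)

variable {κ lam θ v₀ : ℝ} {t : ℕ → ℝ} {N : ℕ} {W : ℝ → Ω → ℝ} {s : ℝ} {ω : Ω}

omit [MeasurableSpace Ω] in
lemma milstein_pos (hκ : 0 ≤ κ) (hc : 0 < κ * lam - θ ^ 2 / 4) (hv₀ : 0 < v₀) {n : ℕ}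
    (ht : ∀ k < n, t k < t (k + 1)) (ω : Ω) : 0 < milstein κ lam θ v₀ t W n ω := by
  induction n with
  | zero => exact hv₀
  | succ n ih =>
    have hstep : 0 < t (n + 1) - t n := sub_pos.2 (ht n n.lt_succ_self)
    simp only [milstein]
    positivity

omit [MeasurableSpace Ω] in
lemma tildeV_eq_sq_add (hv : 0 ≤ milstein κ lam θ v₀ t W (nIdx t N s) ω) :
    tildeV κ lam θ v₀ t N W s ω =
      (√(milstein κ lam θ v₀ t W (nIdx t N s) ω) + θ / 2 * (W s ω - W (eta t N s) ω)) ^ 2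
        + (κ * lam - θ ^ 2 / 4) * (s - eta t N s) := by
  simp only [tildeV]
  linear_combination -Real.sq_sqrt hv

omit [MeasurableSpace Ω] in
lemma milstein_div_hatV_le (hκ : 0 ≤ κ) (hc : 0 < κ * lam - θ ^ 2 / 4)
    (hv : 0 ≤ milstein κ lam θ v₀ t W (nIdx t N s) ω) (hΔ : 0 < s - eta t N s) :
    0 ≤ milstein κ lam θ v₀ t W (nIdx t N s) ω / hatV κ lam θ v₀ t N W s ω ∧
      milstein κ lam θ v₀ t W (nIdx t N s) ω / hatV κ lam θ v₀ t N W s ω ≤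
        (1 + κ * (s - eta t N s)) * (2 + 2 * (θ / 2) ^ 2 / (κ * lam - θ ^ 2 / 4) *
          ((W s ω - W (eta t N s) ω) / √(s - eta t N s)) ^ 2) := by
  rw [hatV, div_div_eq_mul_div, tildeV_eq_sq_add hv, mul_div_right_comm, mul_comm]
  exact ⟨by positivity, mul_le_mul_of_nonneg_left (div_sq_add_le hv hc hΔ _ _) (by positivity)⟩

omit [MeasurableSpace Ω] in
lemma milstein_div_hatV_of_eta_eq (hv : 0 < milstein κ lam θ v₀ t W (nIdx t N s) ω)
    (hs : eta t N s = s) :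
    milstein κ lam θ v₀ t W (nIdx t N s) ω / hatV κ lam θ v₀ t N W s ω = 1 := by
  simp [hatV, tildeV, hs, hv.ne']

theorem statement6_general
    {Ω : Type*} [MeasurableSpace Ω] (P : Measure Ω) [IsProbabilityMeasure P]
    (W : ℝ → Ω → ℝ) (hW : IsBrownian P W)
    (κ lam θ T : ℝ)
    (hκ : 0 < κ) (hθ : 0 < θ) (hT : 0 < T)
    (hFeller : 1 / 2 < 2 * κ * lam / θ ^ 2)
    (q : ℝ) (hq : 1 ≤ q) :
    ∃ C : ℝ, ∀ v₀ : ℝ, 0 < v₀ → ∀ (N : ℕ) (t : ℕ → ℝ), IsPartition t N T →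
      ∀ s ∈ Set.Icc (0 : ℝ) T,
        ∫⁻ ω, ENNReal.ofReal
            ((milstein κ lam θ v₀ t W (nIdx t N s) ω / hatV κ lam θ v₀ t N W s ω) ^ q) ∂P
          ≤ ENNReal.ofReal C := by
  have hc : 0 < κ * lam - θ ^ 2 / 4 := by
    rw [lt_div_iff₀ (by positivity)] at hFeller
    linarith
  set B := 2 * (θ / 2) ^ 2 / (κ * lam - θ ^ 2 / 4)
  have hB : 0 ≤ B := by positivity
  set g : ℝ → ℝ := fun z => ((1 + κ * T) * (2 + B * z ^ 2)) ^ q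
  have hg_int : Integrable g (gaussianReal 0 1) := by
    simpa only [g, mul_add, mul_assoc] using integrable_rpow_add_mul_sq_gaussianReal
      (a := (1 + κ * T) * 2) (b := (1 + κ * T) * B) (by positivity) (by positivity) (by linarith) 0 1
  refine ⟨∫ z, g z ∂gaussianReal 0 1, fun v₀ hv₀ N t ht s hs => ?_⟩
  rw [ofReal_integral_eq_lintegral_ofReal hg_int (ae_of_all _ fun z => by positivity)]
  have hv ω : 0 < milstein κ lam θ v₀ t W (nIdx t N s) ω :=
    milstein_pos hκ.le hc hv₀ (fun k hk => ht.lt k (hk.trans_le (Nat.findGreatest_le N))) ω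
  rcases (eta_le ht hs.1).eq_or_lt with hη | hη
  · have hg_one z : 1 ≤ g z := Real.one_le_rpow
      (one_le_mul_of_one_le_of_one_le (by nlinarith) (by nlinarith [sq_nonneg z])) (by linarith)
    simp only [milstein_div_hatV_of_eta_eq (hv _) hη, Real.one_rpow, ENNReal.ofReal_one,
      lintegral_const, measure_univ, mul_one]
    calc (1 : ℝ≥0∞) = ∫⁻ _, 1 ∂gaussianReal 0 1 := by simp
      _ ≤ _ := lintegral_mono fun z => ENNReal.one_le_ofReal.2 (hg_one z)
  · have hΔ : 0 < s - eta t N s := sub_pos.2 hη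
    calc _ ≤ ∫⁻ ω, ENNReal.ofReal (g ((W s ω - W (eta t N s) ω) / √(s - eta t N s))) ∂P := by
          refine lintegral_mono fun ω => ENNReal.ofReal_le_ofReal ?_
          obtain ⟨h0, hle⟩ := milstein_div_hatV_le hκ.le hc (hv ω).le hΔ
          refine Real.rpow_le_rpow h0 (hle.trans ?_) (by linarith)
          gcongr
          linarith [hs.2, eta_nonneg ht s]
      _ = ∫⁻ z, ENNReal.ofReal (g z) ∂gaussianReal 0 1 := by
          have hZ : Measurable fun ω => (W s ω - W (eta t N s) ω) / √(s - eta t N s) :=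
            ((hW.meas s).sub (hW.meas _)).div_const _
          rw [← hW.map_increment_div_sqrt (eta_nonneg ht s) hη, lintegral_map (by fun_prop) hZ]

/-- under `ν = 2κλ/θ² > 1/2`, for every `q ≥ 1` there is a constant `C`
depending only on `q, κ, λ, θ, T` (independent of `v₀` and of the partition) such that
`sup_{t ∈ [0,T]} E[(v̂_{η(t)} / v̂_t)^q] ≤ C` (recall `v̂_{η(t)} = v_{n(t)}`). -/
theorem statement6
    {Ω : Type*} [MeasurableSpace Ω] (P : Measure Ω) [IsProbabilityMeasure P]
    (W : ℝ → Ω → ℝ) (hW : IsBrownian P W)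
    (κ lam θ T : ℝ)
    (hκ : 0 < κ) (hlam : 0 < lam) (hθ : 0 < θ) (hT : 0 < T)
    (hFeller : 1 / 2 < 2 * κ * lam / θ ^ 2)
    (q : ℝ) (hq : 1 ≤ q) :
    ∃ C : ℝ, ∀ v₀ : ℝ, 0 < v₀ → ∀ (N : ℕ) (t : ℕ → ℝ), IsPartition t N T →
      ∀ s ∈ Set.Icc (0 : ℝ) T,
        ∫⁻ ω, ENNReal.ofReal
            ((milstein κ lam θ v₀ t W (nIdx t N s) ω / hatV κ lam θ v₀ t N W s ω) ^ q) ∂P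
          ≤ ENNReal.ofReal C :=
  statement6_general P W hW κ lam θ T hκ hθ hT hFeller q hq
end
end

section
/- Assume 4κλ ≥ θ². Then, almost surely, the drift-implicit Milstein scheme dominates the drift-implicit square-root Euler scheme: v_k ≥ a_k for all k = 0, 1, …, N. -/
open MeasureTheory ProbabilityTheory
open scoped ENNReal NNReal

noncomputable section

variable {Ω : Type*} [MeasurableSpace Ω]

/-- Drift-implicit square-root Euler scheme `a_k` for the CIR process. -/
def sqrtEuler (κ lam θ v₀ : ℝ) (t : ℕ → ℝ) (W : ℝ → Ω → ℝ) : ℕ → Ω → ℝ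
  | 0 => fun _ => v₀
  | k + 1 => fun ω =>
      ((Real.sqrt (sqrtEuler κ lam θ v₀ t W k ω)
            + (θ / 2) * (W (t (k + 1)) ω - W (t k) ω)) / (2 + κ * (t (k + 1) - t k))
        + Real.sqrt
            ((Real.sqrt (sqrtEuler κ lam θ v₀ t W k ω)
                + (θ / 2) * (W (t (k + 1)) ω - W (t k) ω)) ^ 2
                / (2 + κ * (t (k + 1) - t k)) ^ 2
              + (κ * lam - θ ^ 2 / 4) * (t (k + 1) - t k)
                / (2 + κ * (t (k + 1) - t k)))) ^ 2

/-! The square-root Euler step is `a' = x²`, where `x ≥ 0` is the positive root of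
`(2 + κh) x² = 2 b x + d` with `b = √a + (θ/2) ΔW` and `d = (κλ - θ²/4) h ≥ 0`. Rearranged,
`(1 + κh) x² = c² + d - (x - c)² - 2 x (c - b)` for any `c`; taking `c = √v + (θ/2) ΔW` with
`a ≤ v` gives `b ≤ c`, so `(1 + κh) x²` is at most `c² + d`, which is `(1 + κh)` times the
Milstein step. Induction on `k` then gives `a_k ≤ v_k` on every path. -/

lemma div_add_sqrt_nonneg {M b d : ℝ} (hM : 0 < M) (hd : 0 ≤ d) :
    0 ≤ b / M + √(b ^ 2 / M ^ 2 + d / M) := by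
  have hle : |b / M| ≤ √(b ^ 2 / M ^ 2 + d / M) :=
    Real.abs_le_sqrt (by rw [div_pow]; linarith [div_nonneg hd hM.le])
  linarith [neg_abs_le (b / M)]

lemma mul_sq_div_add_sqrt {M b d : ℝ} (hM : 0 < M) (hd : 0 ≤ d) :
    M * (b / M + √(b ^ 2 / M ^ 2 + d / M)) ^ 2
      = 2 * b * (b / M + √(b ^ 2 / M ^ 2 + d / M)) + d := by
  have hs := Real.sq_sqrt (show 0 ≤ b ^ 2 / M ^ 2 + d / M by positivity)
  field_simp at hs ⊢
  linear_combination hs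

lemma mul_sq_le_of_quadratic_eq {m x b c d : ℝ} (hx : 0 ≤ x) (hbc : b ≤ c)
    (hroot : (m + 1) * x ^ 2 = 2 * b * x + d) : m * x ^ 2 ≤ c ^ 2 + d := by
  nlinarith [sq_nonneg (x - c), mul_le_mul_of_nonneg_left hbc hx]

lemma sqrtEuler_step_le_milstein_step {ε b c d : ℝ} (hε : 0 < 1 + ε) (hd : 0 ≤ d)
    (hbc : b ≤ c) :
    (b / (2 + ε) + √(b ^ 2 / (2 + ε) ^ 2 + d / (2 + ε))) ^ 2 ≤ 1 / (1 + ε) * (c ^ 2 + d) := by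
  have hM : 0 < 2 + ε := by linarith
  have hroot := mul_sq_div_add_sqrt (b := b) hM hd
  rw [show 2 + ε = 1 + ε + 1 by ring] at hroot ⊢
  rw [one_div_mul_eq_div, le_div_iff₀ hε, mul_comm]
  exact mul_sq_le_of_quadratic_eq (div_add_sqrt_nonneg (by linarith) hd) hbc hroot

theorem statement9_general
    {Ω : Type*} [MeasurableSpace Ω] (P : Measure Ω)
    (W : ℝ → Ω → ℝ)
    (κ lam θ v₀ T : ℝ)
    (hκ : 0 < κ)
    (hF : θ ^ 2 ≤ 4 * κ * lam) :
    ∀ (N : ℕ) (t : ℕ → ℝ), IsPartition t N T →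
      ∀ᵐ ω ∂P, ∀ k ≤ N, sqrtEuler κ lam θ v₀ t W k ω ≤ milstein κ lam θ v₀ t W k ω := by
  intro N t hpart
  refine ae_of_all P fun ω k hk => ?_
  induction k with
  | zero => exact le_rfl
  | succ n ih =>
    have hh : 0 < t (n + 1) - t n := sub_pos.2 (hpart.lt n hk)
    have hd : 0 ≤ (κ * lam - θ ^ 2 / 4) * (t (n + 1) - t n) :=
      mul_nonneg (by linarith) hh.le
    exact sqrtEuler_step_le_milstein_step (by positivity) hd
      (add_le_add_left (Real.sqrt_le_sqrt (ih (Nat.le_of_succ_le hk))) _)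

/-- if `4κλ ≥ θ²` then, almost surely, the drift-implicit Milstein scheme
dominates the drift-implicit square-root Euler scheme: `v_k ≥ a_k` for all `k = 0, …, N`. -/
theorem statement9
    {Ω : Type*} [MeasurableSpace Ω] (P : Measure Ω) [IsProbabilityMeasure P]
    (W : ℝ → Ω → ℝ) (hW : IsBrownian P W)
    (κ lam θ v₀ T : ℝ)
    (hκ : 0 < κ) (hlam : 0 < lam) (hθ : 0 < θ) (hv₀ : 0 < v₀) (hT : 0 < T)
    (hF : θ ^ 2 ≤ 4 * κ * lam) :
    ∀ (N : ℕ) (t : ℕ → ℝ), IsPartition t N T →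
      ∀ᵐ ω ∂P, ∀ k ≤ N, sqrtEuler κ lam θ v₀ t W k ω ≤ milstein κ lam θ v₀ t W k ω :=
  statement9_general P W κ lam θ v₀ T hκ hF

end
end

section
/- Assume ν = 2κλ/θ² > 1/2. For every p ≥ 1 there exists a constant C depending only on p, κ, λ, θ, v₀, T (independent of the partition) such that for every partition 0 = t₀ < ⋯ < t_N = T one has E[ max_{0≤k≤N} a_k^p ] ≤ C. -/
open MeasureTheory ProbabilityTheory
open scoped ENNReal NNReal

noncomputable section

variable {Ω : Type*} [MeasurableSpace Ω]

/-!
A root computation bounds one step of the scheme by an explicit square,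
`a_{k+1} ≤ (√a_k + (θ/2) Δ_kW)² + κλ h_k`. Integrating `exp (c (m + (θ/2) Δ_kW)²)` against the
Gaussian law of `Δ_kW` replaces `c` by `c / (1 - c θ² h_k / 2)`, so with the time-dependent
coefficient `α(s) = 2 / (θ² (2T + s))` (`expMomentWeight`), which this map sends from
`α(t_{k+1})` to `α(t_k)`, the process `Z_k = exp (α(t_k) a_k - γ t_k)` (`sqrtEulerExpProcess`)
is a nonnegative supermartingale, tested against events determined by the past increments,
for a constant `γ` independent of the partition. The first-passage argument behind Doob's
maximal inequality gives `P(max_k a_k ≥ x) ≤ K exp (-α(T) x)`, and the layer-cake formula turns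
this exponential tail into a bound on `E[(max_k a_k)^p]`.
-/

open Real Set

lemma inv_sqrt_one_sub_le_exp_two_mul {u : ℝ} (hu0 : 0 ≤ u) (hu : u ≤ 1 / 2) :
    (√(1 - u))⁻¹ ≤ exp (2 * u) := by
  have h1u : 0 < 1 - u := by linarith
  calc (√(1 - u))⁻¹ ≤ (1 - u)⁻¹ := by
        gcongr
        rw [Real.le_sqrt h1u.le] <;> nlinarith
    _ ≤ 1 + 2 * u := by
        rw [inv_le_iff_one_le_mul₀ h1u]
        nlinarith
    _ ≤ exp (2 * u) := by linarith [add_one_le_exp (2 * u)]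

lemma lintegral_exp_mul_sq_gaussianReal_le {c s h m : ℝ} (hc : 0 ≤ c) (hh : 0 < h)
    (hu : 2 * c * s ^ 2 * h ≤ 1 / 2) :
    ∫⁻ y, ENNReal.ofReal (exp (c * (m + s * y) ^ 2)) ∂gaussianReal 0 h.toNNReal
      ≤ ENNReal.ofReal (exp (c / (1 - 2 * c * s ^ 2 * h) * m ^ 2 + 4 * c * s ^ 2 * h)) := by
  set u := 2 * c * s ^ 2 * h with hu_def
  have hu0 : 0 ≤ u := by positivity
  have h1u : 0 < 1 - u := by linarith
  have hvar : ((h.toNNReal : ℝ≥0) : ℝ) = h := Real.coe_toNNReal h hh.le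
  set β := (1 - u) / (2 * h) with hβ_def
  have hβ : 0 < β := by positivity
  set δ := c * m * s / β
  set R := c / (1 - u) * m ^ 2
  have hsquare : ∀ y : ℝ, -(y - 0) ^ 2 / (2 * h) + c * (m + s * y) ^ 2
      = R + -β * (y - δ) ^ 2 := by
    intro y
    simp only [R, δ, hβ_def]
    field_simp
    ring
  have hint : Integrable fun y : ℝ => (√(2 * π * h))⁻¹ * exp R * exp (-β * (y - δ) ^ 2) :=
    ((integrable_exp_neg_mul_sq hβ).comp_sub_right δ).const_mul _
  have hmass : (√(2 * π * h))⁻¹ * √(π / β) = (√(1 - u))⁻¹ := by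
    rw [← Real.sqrt_inv, ← Real.sqrt_inv, ← Real.sqrt_mul (by positivity), hβ_def]
    congr 1
    field_simp
  rw [gaussianReal_of_var_ne_zero 0 (by simpa using hh),
    lintegral_withDensity_eq_lintegral_mul _ (measurable_gaussianPDF _ _) (by fun_prop)]
  calc ∫⁻ y, (gaussianPDF 0 h.toNNReal * fun y => ENNReal.ofReal (exp (c * (m + s * y) ^ 2))) y
      = ∫⁻ y, ENNReal.ofReal ((√(2 * π * h))⁻¹ * exp R * exp (-β * (y - δ) ^ 2)) := by
        refine lintegral_congr fun y => ?_
        simp only [Pi.mul_apply, gaussianPDF, gaussianPDFReal, hvar]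
        rw [← ENNReal.ofReal_mul (by positivity), mul_assoc, ← exp_add, hsquare, exp_add]
        ring_nf
    _ = ENNReal.ofReal ((√(1 - u))⁻¹ * exp R) := by
        rw [← ofReal_integral_eq_lintegral_ofReal hint (.of_forall fun y => by positivity),
          integral_const_mul, integral_sub_right_eq_self (fun y => exp (-β * y ^ 2)),
          integral_gaussian, ← hmass, mul_right_comm]
    _ ≤ ENNReal.ofReal (exp (R + 4 * c * s ^ 2 * h)) := by
        rw [exp_add, mul_comm (exp R)]
        gcongr
        exact (inv_sqrt_one_sub_le_exp_two_mul hu0 hu).trans_eq (by rw [hu_def]; ring_nf)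

lemma setLIntegral_preimage_le_of_indepFun {β : Type*} [MeasurableSpace β] {μ : Measure Ω}
    [IsFiniteMeasure μ] {X : Ω → β} {Y : Ω → ℝ} (hX : Measurable X) (hY : Measurable Y)
    (hXY : IndepFun X Y μ) {S : Set β} (hS : MeasurableSet S) {F : β → ℝ → ℝ≥0∞}
    (hF : Measurable fun q : β × ℝ => F q.1 q.2) {G : β → ℝ≥0∞} (hG : Measurable G)
    (hFG : ∀ v ∈ S, ∫⁻ y, F v y ∂μ.map Y ≤ G v) :
    ∫⁻ ω in X ⁻¹' S, F (X ω) (Y ω) ∂μ ≤ ∫⁻ ω in X ⁻¹' S, G (X ω) ∂μ := by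
  have hlaw := (indepFun_iff_map_prod_eq_prod_map_map hX.aemeasurable hY.aemeasurable).mp hXY
  calc ∫⁻ ω in X ⁻¹' S, F (X ω) (Y ω) ∂μ
      = ∫⁻ q in S ×ˢ univ, F q.1 q.2 ∂μ.map fun ω => (X ω, Y ω) := by
        rw [setLIntegral_map (hS.prod .univ) hF (hX.prodMk hY), mk_preimage_prod,
          preimage_univ, inter_univ]
    _ = ∫⁻ v in S, ∫⁻ y, F v y ∂μ.map Y ∂μ.map X := by
        rw [hlaw, ← Measure.prod_restrict, Measure.restrict_univ, lintegral_prod _ hF.aemeasurable]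
    _ ≤ ∫⁻ v in S, G v ∂μ.map X := setLIntegral_mono' hS hFG
    _ = ∫⁻ ω in X ⁻¹' S, G (X ω) ∂μ := setLIntegral_map hS hG hX

lemma mul_measure_accumulate_le_lintegral {μ : Measure Ω} {E : ℕ → Set Ω}
    (hE : ∀ k, MeasurableSet (E k)) {Z : ℕ → Ω → ℝ≥0∞} {c : ℝ≥0∞} {N : ℕ}
    (hcZ : ∀ k ≤ N, ∀ ω ∈ E k, c ≤ Z k ω)
    (hZ : ∀ k < N, ∫⁻ ω in (accumulate E k)ᶜ, Z (k + 1) ω ∂μ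
      ≤ ∫⁻ ω in (accumulate E k)ᶜ, Z k ω ∂μ) :
    c * μ (accumulate E N) ≤ ∫⁻ ω, Z 0 ω ∂μ := by
  have hacc : ∀ n, MeasurableSet (accumulate E n) := fun n => by
    rw [accumulate_def]
    exact .biUnion (to_countable _) fun k _ => hE k
  have hfirst : ∀ n ≤ N, ∀ A : Set Ω, c * μ (Aᶜ ∩ E n) + ∫⁻ ω in Aᶜ ∩ (E n)ᶜ, Z n ω ∂μ
      ≤ ∫⁻ ω in Aᶜ, Z n ω ∂μ := by
    intro n hn A
    calc c * μ (Aᶜ ∩ E n) + ∫⁻ ω in Aᶜ ∩ (E n)ᶜ, Z n ω ∂μ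
        = ∫⁻ _ in E n, c ∂μ.restrict Aᶜ + ∫⁻ ω in (E n)ᶜ, Z n ω ∂μ.restrict Aᶜ := by
          rw [setLIntegral_const, Measure.restrict_apply (hE n), Measure.restrict_restrict
            (hE n).compl, inter_comm (E n), inter_comm (E n)ᶜ, mul_comm]
      _ ≤ ∫⁻ ω in E n, Z n ω ∂μ.restrict Aᶜ + ∫⁻ ω in (E n)ᶜ, Z n ω ∂μ.restrict Aᶜ :=
          add_le_add_left (setLIntegral_mono' (hE n) (hcZ n hn)) _
      _ = ∫⁻ ω in Aᶜ, Z n ω ∂μ := lintegral_add_compl _ (hE n)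
  have key : ∀ n ≤ N,
      c * μ (accumulate E n) + ∫⁻ ω in (accumulate E n)ᶜ, Z n ω ∂μ ≤ ∫⁻ ω, Z 0 ω ∂μ := by
    intro n hn
    induction n with
    | zero => simpa [accumulate_zero_nat] using hfirst 0 hn ∅
    | succ n ih =>
      set A := accumulate E n
      have hunion : accumulate E (n + 1) = A ∪ (Aᶜ ∩ E (n + 1)) := by
        rw [accumulate_succ, union_inter_distrib_left, union_compl_self, univ_inter]
      have hcompl : (accumulate E (n + 1))ᶜ = Aᶜ ∩ (E (n + 1))ᶜ := by
        rw [accumulate_succ, compl_union]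
      calc c * μ (accumulate E (n + 1)) + ∫⁻ ω in (accumulate E (n + 1))ᶜ, Z (n + 1) ω ∂μ
          = c * μ A + (c * μ (Aᶜ ∩ E (n + 1))
              + ∫⁻ ω in Aᶜ ∩ (E (n + 1))ᶜ, Z (n + 1) ω ∂μ) := by
            rw [hcompl, hunion, measure_union (disjoint_compl_right.mono_right inter_subset_left)
              ((hacc n).compl.inter (hE _)), mul_add, add_assoc]
        _ ≤ c * μ A + ∫⁻ ω in Aᶜ, Z n ω ∂μ := by
            gcongr
            exact (hfirst (n + 1) hn A).trans (hZ n hn)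
        _ ≤ ∫⁻ ω, Z 0 ω ∂μ := ih (by omega)
  exact le_self_add.trans (key N le_rfl)

lemma lintegral_ofReal_rpow_le_of_measure_le_exp {μ : Measure Ω} {f : Ω → ℝ}
    (hf0 : ∀ ω, 0 ≤ f ω) (hf : AEMeasurable f μ) {p K α : ℝ} (hp : 0 < p) (hK : 0 ≤ K)
    (hα : 0 < α) (htail : ∀ x, 0 < x → μ {ω | x ≤ f ω} ≤ ENNReal.ofReal (K * exp (-(α * x)))) :
    ∫⁻ ω, ENNReal.ofReal (f ω ^ p) ∂μ ≤ ENNReal.ofReal (p * K * ((1 / α) ^ p * Gamma p)) := by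
  have hint : IntegrableOn (fun t : ℝ => K * (t ^ (p - 1) * exp (-(α * t)))) (Ioi 0) := by
    refine ((integrableOn_rpow_mul_exp_neg_mul_rpow (s := p - 1) (by linarith) one_pos hα).congr_fun
      (fun t _ => ?_) measurableSet_Ioi).const_mul K
    rw [rpow_one, neg_mul]
  rw [lintegral_rpow_eq_lintegral_meas_le_mul μ (.of_forall hf0) hf hp]
  calc ENNReal.ofReal p * ∫⁻ t in Ioi 0, μ {ω | t ≤ f ω} * ENNReal.ofReal (t ^ (p - 1))
      ≤ ENNReal.ofReal p * ∫⁻ t in Ioi 0,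
          ENNReal.ofReal (K * exp (-(α * t))) * ENNReal.ofReal (t ^ (p - 1)) := by
        refine mul_le_mul_right (setLIntegral_mono' measurableSet_Ioi fun t ht => ?_) _
        exact mul_le_mul_left (htail t ht) _
    _ = ENNReal.ofReal p * ∫⁻ t in Ioi 0, ENNReal.ofReal (K * (t ^ (p - 1) * exp (-(α * t)))) := by
        congr 1
        refine lintegral_congr fun t => ?_
        rw [← ENNReal.ofReal_mul (by positivity)]
        ring_nf
    _ = ENNReal.ofReal (p * K * ((1 / α) ^ p * Gamma p)) := by
        rw [← ofReal_integral_eq_lintegral_ofReal hint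
            ((ae_restrict_iff' measurableSet_Ioi).mpr (.of_forall fun t ht => by
              have : (0 : ℝ) < t := ht
              positivity)),
          integral_const_mul, integral_rpow_mul_exp_neg_mul_Ioi hp hα, ← ENNReal.ofReal_mul hp.le,
          mul_assoc]

lemma iSup_range_rpow_le_rpow_sup' {f : ℕ → ℝ} (hf : ∀ k, 0 ≤ f k) {p : ℝ} (hp : 0 ≤ p)
    (N : ℕ) : ⨆ k ∈ Finset.range (N + 1), f k ^ p
      ≤ (Finset.range (N + 1)).sup' Finset.nonempty_range_add_one f ^ p := by
  have hmax := rpow_nonneg ((hf 0).trans (Finset.le_sup' f (Finset.mem_range.mpr N.succ_pos))) p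
  exact Real.iSup_le (fun k => Real.iSup_le
    (fun hk => rpow_le_rpow (hf k) (Finset.le_sup' f hk) hp) hmax) hmax

def sqrtEulerStep (κ lam θ h a w : ℝ) : ℝ :=
  ((√a + (θ / 2) * w) / (2 + κ * h)
    + √((√a + (θ / 2) * w) ^ 2 / (2 + κ * h) ^ 2 + (κ * lam - θ ^ 2 / 4) * h / (2 + κ * h))) ^ 2

lemma sqrtEuler_succ (κ lam θ v₀ : ℝ) (t : ℕ → ℝ) {Ω : Type*} (W : ℝ → Ω → ℝ) (k : ℕ) (ω : Ω) :
    sqrtEuler κ lam θ v₀ t W (k + 1) ω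
      = sqrtEulerStep κ lam θ (t (k + 1) - t k) (sqrtEuler κ lam θ v₀ t W k ω)
          (W (t (k + 1)) ω - W (t k) ω) := rfl

lemma sqrtEulerStep_le {κ lam θ h : ℝ} (hκ : 0 ≤ κ) (hν : θ ^ 2 / 4 ≤ κ * lam) (hh : 0 ≤ h)
    (a w : ℝ) : sqrtEulerStep κ lam θ h a w ≤ (√a + (θ / 2) * w) ^ 2 + κ * lam * h := by
  set x := √a + (θ / 2) * w
  set d := 2 + κ * h
  have hd : 2 ≤ d := by simp only [d]; nlinarith
  have hD : 0 ≤ x ^ 2 / d ^ 2 + (κ * lam - θ ^ 2 / 4) * h / d := by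
    have : 0 ≤ κ * lam - θ ^ 2 / 4 := by linarith
    positivity
  set y := x / d + √(x ^ 2 / d ^ 2 + (κ * lam - θ ^ 2 / 4) * h / d)
  -- the implicit step takes `√a_{k+1}` to be the positive root `y` of this quadratic
  have hroot : d * y ^ 2 = 2 * x * y + (κ * lam - θ ^ 2 / 4) * h := by
    have hsq := Real.sq_sqrt hD
    simp only [y]
    field_simp
    field_simp at hsq
    nlinarith [hsq]
  show y ^ 2 ≤ x ^ 2 + κ * lam * h
  nlinarith [sq_nonneg (x - y), mul_nonneg (mul_nonneg hκ hh) (sq_nonneg y),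
    mul_nonneg (sq_nonneg θ) hh]

lemma lintegral_exp_mul_sqrtEulerStep_le {κ lam θ h c a : ℝ} (hκ : 0 ≤ κ)
    (hν : θ ^ 2 / 4 ≤ κ * lam) (hh : 0 < h) (hc : 0 ≤ c) (hch : c * θ ^ 2 * h ≤ 1)
    (ha : 0 ≤ a) :
    ∫⁻ w, ENNReal.ofReal (exp (c * sqrtEulerStep κ lam θ h a w)) ∂gaussianReal 0 h.toNNReal
      ≤ ENNReal.ofReal (exp (c / (1 - c * θ ^ 2 * h / 2) * a + c * (κ * lam + θ ^ 2) * h)) := by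
  have hgauss := lintegral_exp_mul_sq_gaussianReal_le (m := √a) (s := θ / 2) hc hh
    (by nlinarith)
  calc ∫⁻ w, ENNReal.ofReal (exp (c * sqrtEulerStep κ lam θ h a w)) ∂gaussianReal 0 h.toNNReal
      ≤ ∫⁻ w, ENNReal.ofReal (exp (c * κ * lam * h))
          * ENNReal.ofReal (exp (c * (√a + θ / 2 * w) ^ 2)) ∂gaussianReal 0 h.toNNReal := by
        refine lintegral_mono fun w => ?_
        rw [← ENNReal.ofReal_mul (exp_pos _).le, ← exp_add]
        gcongr
        nlinarith [mul_le_mul_of_nonneg_left (sqrtEulerStep_le hκ hν hh.le a w) hc]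
    _ = ENNReal.ofReal (exp (c * κ * lam * h)) * ∫⁻ w, ENNReal.ofReal
          (exp (c * (√a + θ / 2 * w) ^ 2)) ∂gaussianReal 0 h.toNNReal :=
        lintegral_const_mul _ (by fun_prop)
    _ ≤ _ := by
        grw [hgauss]
        rw [← ENNReal.ofReal_mul (exp_pos _).le, ← exp_add, sq_sqrt ha]
        exact le_of_eq (by congr 2; ring)

def sqrtEulerPath (κ lam θ v₀ : ℝ) (t w : ℕ → ℝ) : ℕ → ℝ
  | 0 => v₀
  | k + 1 => sqrtEulerStep κ lam θ (t (k + 1) - t k) (sqrtEulerPath κ lam θ v₀ t w k) (w k)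

lemma sqrtEuler_eq_sqrtEulerPath (κ lam θ v₀ : ℝ) (t : ℕ → ℝ) {Ω : Type*} (W : ℝ → Ω → ℝ)
    (k : ℕ) (ω : Ω) :
    sqrtEuler κ lam θ v₀ t W k ω
      = sqrtEulerPath κ lam θ v₀ t (fun i => W (t (i + 1)) ω - W (t i) ω) k := by
  induction k with
  | zero => rfl
  | succ k ih => rw [sqrtEuler_succ, ih]; rfl

lemma sqrtEulerPath_congr (κ lam θ v₀ : ℝ) (t : ℕ → ℝ) {w w' : ℕ → ℝ} {k : ℕ}
    (hw : ∀ i < k, w i = w' i) :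
    sqrtEulerPath κ lam θ v₀ t w k = sqrtEulerPath κ lam θ v₀ t w' k := by
  induction k with
  | zero => rfl
  | succ k ih =>
    simp only [sqrtEulerPath]
    rw [ih fun i hi => hw i (by omega), hw k (by omega)]

lemma sqrtEulerPath_nonneg (κ lam θ : ℝ) {v₀ : ℝ} (hv₀ : 0 ≤ v₀) (t w : ℕ → ℝ) (k : ℕ) :
    0 ≤ sqrtEulerPath κ lam θ v₀ t w k := by
  cases k with
  | zero => exact hv₀
  | succ k => exact sq_nonneg _

lemma sqrtEuler_nonneg (κ lam θ : ℝ) {v₀ : ℝ} (hv₀ : 0 ≤ v₀) (t : ℕ → ℝ) {Ω : Type*}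
    (W : ℝ → Ω → ℝ) (k : ℕ) (ω : Ω) : 0 ≤ sqrtEuler κ lam θ v₀ t W k ω := by
  rw [sqrtEuler_eq_sqrtEulerPath]
  exact sqrtEulerPath_nonneg κ lam θ hv₀ t _ k

lemma measurable_sqrtEulerPath (κ lam θ v₀ : ℝ) (t : ℕ → ℝ) (k : ℕ) :
    Measurable fun w : ℕ → ℝ => sqrtEulerPath κ lam θ v₀ t w k := by
  induction k with
  | zero => exact measurable_const
  | succ k ih =>
    have hw := measurable_pi_apply (X := fun _ : ℕ => ℝ) k
    simp only [sqrtEulerPath, sqrtEulerStep]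
    fun_prop

lemma measurable_sqrtEuler (κ lam θ v₀ : ℝ) (t : ℕ → ℝ) {W : ℝ → Ω → ℝ}
    (hW : ∀ s, Measurable (W s)) (k : ℕ) : Measurable (sqrtEuler κ lam θ v₀ t W k) := by
  rw [funext (sqrtEuler_eq_sqrtEulerPath κ lam θ v₀ t W k)]
  exact (measurable_sqrtEulerPath κ lam θ v₀ t k).comp
    (measurable_pi_lambda _ fun i => (hW _).sub (hW _))

def expMomentWeight (θ T s : ℝ) : ℝ := 2 / (θ ^ 2 * (2 * T + s))

lemma expMomentWeight_pos {θ T s : ℝ} (hθ : θ ≠ 0) (hs : 0 < 2 * T + s) :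
    0 < expMomentWeight θ T s := by
  unfold expMomentWeight; positivity

lemma expMomentWeight_le_of_le {θ T s s' : ℝ} (hθ : θ ≠ 0) (hs : 0 < 2 * T + s) (hss' : s ≤ s') :
    expMomentWeight θ T s' ≤ expMomentWeight θ T s := by
  unfold expMomentWeight; gcongr

lemma expMomentWeight_div_one_sub {θ T s h : ℝ} (hθ : θ ≠ 0) (hs : 0 < 2 * T + s) (hh : 0 ≤ h) :
    expMomentWeight θ T (s + h) / (1 - expMomentWeight θ T (s + h) * θ ^ 2 * h / 2)
      = expMomentWeight θ T s := by
  unfold expMomentWeight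
  have hsh : 2 * T + (s + h) ≠ 0 := by linarith
  have hden : 1 - 2 / (θ ^ 2 * (2 * T + (s + h))) * θ ^ 2 * h / 2
      = (2 * T + s) / (2 * T + (s + h)) := by
    field_simp
    ring
  rw [hden]
  field_simp

lemma IsPartition.le_of_le {t : ℕ → ℝ} {N : ℕ} {T : ℝ} (ht : IsPartition t N T) {i j : ℕ}
    (hij : i ≤ j) (hj : j ≤ N) : t i ≤ t j := by
  induction j, hij using Nat.le_induction with
  | base => rfl
  | succ j hij ih => exact (ih (by omega)).trans (ht.lt j (by omega)).le

def truncIncrements (W : ℝ → Ω → ℝ) (u : ℕ → ℝ) (k : ℕ) (ω : Ω) : ℕ → ℝ :=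
  fun i => if i < k then W (u (i + 1)) ω - W (u i) ω else 0

lemma measurable_truncIncrements {W : ℝ → Ω → ℝ} (hW : ∀ s, Measurable (W s)) (u : ℕ → ℝ)
    (k : ℕ) : Measurable (truncIncrements W u k) := by
  refine measurable_pi_lambda _ fun i => ?_
  unfold truncIncrements
  split_ifs
  · exact (hW _).sub (hW _)
  · exact measurable_const

lemma IsBrownian.indepFun_truncIncrements {P : Measure Ω} {W : ℝ → Ω → ℝ} (hW : IsBrownian P W)
    {u : ℕ → ℝ} (hu : Monotone u) (k : ℕ) :
    IndepFun (truncIncrements W u k) (fun ω => W (u (k + 1)) ω - W (u k) ω) P := by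
  have hmeas : ∀ i, Measurable fun ω => W (u (i + 1)) ω - W (u i) ω :=
    fun i => (hW.meas _).sub (hW.meas _)
  have hpast := (hW.indep u hu).indepFun_finset (Finset.range k) {k} (by simp) hmeas
  have hnow : Measurable fun v : ({k} : Finset ℕ) → ℝ => v ⟨k, Finset.mem_singleton_self k⟩ :=
    measurable_pi_apply _
  have hextend : Measurable fun (v : Finset.range k → ℝ) (i : ℕ) =>
      if h : i < k then v ⟨i, Finset.mem_range.mpr h⟩ else 0 := by
    refine measurable_pi_lambda _ fun i => ?_
    split_ifs
    · exact measurable_pi_apply _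
    · exact measurable_const
  exact hpast.comp hextend hnow

lemma sqrtEuler_eq_sqrtEulerPath_truncIncrements (κ lam θ v₀ : ℝ) (t : ℕ → ℝ) {Ω : Type*}
    (W : ℝ → Ω → ℝ) {N j k : ℕ} (hjk : j ≤ k) (hk : k ≤ N) (ω : Ω) :
    sqrtEuler κ lam θ v₀ t W j ω
      = sqrtEulerPath κ lam θ v₀ t (truncIncrements W (fun i => t (min i N)) k ω) j := by
  rw [sqrtEuler_eq_sqrtEulerPath]
  refine sqrtEulerPath_congr _ _ _ _ _ fun i hi => ?_
  simp only [truncIncrements, if_pos (show i < k by omega),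
    min_eq_left (show i + 1 ≤ N by omega), min_eq_left (show i ≤ N by omega)]

lemma compl_accumulate_le_sqrtEuler_eq_preimage (κ lam θ v₀ : ℝ) (t : ℕ → ℝ) {Ω : Type*}
    (W : ℝ → Ω → ℝ) {x : ℝ} {N k : ℕ} (hk : k ≤ N) :
    (accumulate (fun j => {ω | x ≤ sqrtEuler κ lam θ v₀ t W j ω}) k)ᶜ
      = truncIncrements W (fun i => t (min i N)) k ⁻¹'
          {v | ∀ j ≤ k, sqrtEulerPath κ lam θ v₀ t v j < x} := by
  ext ω
  simp only [mem_compl_iff, mem_accumulate, mem_ofPred_eq, mem_preimage, not_exists, not_and,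
    not_le]
  exact forall₂_congr fun j hj => by
    rw [sqrtEuler_eq_sqrtEulerPath_truncIncrements κ lam θ v₀ t W hj hk]

def sqrtEulerExpProcess (κ lam θ v₀ T : ℝ) (t : ℕ → ℝ) (W : ℝ → Ω → ℝ) (k : ℕ) (ω : Ω) : ℝ≥0∞ :=
  ENNReal.ofReal (exp (expMomentWeight θ T (t k) * sqrtEuler κ lam θ v₀ t W k ω
    - (κ * lam + θ ^ 2) * expMomentWeight θ T 0 * t k))

lemma lintegral_exp_expMomentWeight_sqrtEulerStep_le {κ lam θ T s s' a : ℝ} (hκ : 0 ≤ κ)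
    (hν : θ ^ 2 / 4 ≤ κ * lam) (hθ : θ ≠ 0) (hT : 0 < T) (hs : 0 ≤ s) (hss' : s < s')
    (hs'T : s' ≤ T) (ha : 0 ≤ a) :
    ∫⁻ w, ENNReal.ofReal (exp (expMomentWeight θ T s' * sqrtEulerStep κ lam θ (s' - s) a w
        - (κ * lam + θ ^ 2) * expMomentWeight θ T 0 * s')) ∂gaussianReal 0 (s' - s).toNNReal
      ≤ ENNReal.ofReal (exp (expMomentWeight θ T s * a
        - (κ * lam + θ ^ 2) * expMomentWeight θ T 0 * s)) := by
  set h := s' - s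
  set c := expMomentWeight θ T s'
  set γ := (κ * lam + θ ^ 2) * expMomentWeight θ T 0
  have hh : 0 < h := sub_pos.mpr hss'
  have hc : 0 < c := expMomentWeight_pos hθ (by linarith)
  have hc_le : c ≤ expMomentWeight θ T 0 := expMomentWeight_le_of_le hθ (by linarith) (by linarith)
  have hch : c * θ ^ 2 * h ≤ 1 := by
    have hw0 : expMomentWeight θ T 0 * θ ^ 2 * T = 1 := by
      unfold expMomentWeight
      field_simp
      ring
    have : c * h ≤ expMomentWeight θ T 0 * T :=
      mul_le_mul hc_le (by linarith) hh.le (expMomentWeight_pos hθ (by linarith)).le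
    nlinarith [sq_nonneg θ]
  have hc_div : c / (1 - c * θ ^ 2 * h / 2) = expMomentWeight θ T s := by
    simpa [c, h] using expMomentWeight_div_one_sub (T := T) (s := s) hθ (by linarith) hh.le
  have hgrowth : c * (κ * lam + θ ^ 2) * h ≤ γ * h := by
    rw [mul_comm c]
    exact mul_le_mul_of_nonneg_right
      (mul_le_mul_of_nonneg_left hc_le (by nlinarith [sq_nonneg θ])) hh.le
  calc ∫⁻ w, ENNReal.ofReal (exp (c * sqrtEulerStep κ lam θ h a w - γ * s'))
          ∂gaussianReal 0 h.toNNReal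
      = (∫⁻ w, ENNReal.ofReal (exp (c * sqrtEulerStep κ lam θ h a w)) ∂gaussianReal 0 h.toNNReal)
          * ENNReal.ofReal (exp (-(γ * s'))) := by
        rw [← lintegral_mul_const _ (by unfold sqrtEulerStep; fun_prop)]
        refine lintegral_congr fun w => ?_
        rw [← ENNReal.ofReal_mul (exp_pos _).le, ← exp_add, ← sub_eq_add_neg]
    _ ≤ ENNReal.ofReal (exp (c / (1 - c * θ ^ 2 * h / 2) * a + c * (κ * lam + θ ^ 2) * h))
          * ENNReal.ofReal (exp (-(γ * s'))) := by
        gcongr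
        exact lintegral_exp_mul_sqrtEulerStep_le hκ hν hh hc.le hch ha
    _ ≤ ENNReal.ofReal (exp (expMomentWeight θ T s * a - γ * s)) := by
        rw [← ENNReal.ofReal_mul (exp_pos _).le, ← exp_add, hc_div]
        refine ENNReal.ofReal_le_ofReal (exp_le_exp.mpr ?_)
        simp only [h] at hgrowth
        nlinarith

/- The partition is frozen after `t_N` to get the monotone sequence of times that
`IsBrownian.indep` is stated for. -/
lemma setLIntegral_sqrtEulerExpProcess_succ_le {P : Measure Ω} [IsFiniteMeasure P]
    {W : ℝ → Ω → ℝ} (hW : IsBrownian P W) {κ lam θ v₀ T : ℝ} {t : ℕ → ℝ} {N : ℕ}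
    (ht : IsPartition t N T) (hκ : 0 ≤ κ) (hν : θ ^ 2 / 4 ≤ κ * lam) (hθ : θ ≠ 0) (hT : 0 < T)
    (hv₀ : 0 ≤ v₀) {k : ℕ} (hk : k < N) {S : Set (ℕ → ℝ)} (hS : MeasurableSet S) :
    ∫⁻ ω in truncIncrements W (fun j => t (min j N)) k ⁻¹' S,
        sqrtEulerExpProcess κ lam θ v₀ T t W (k + 1) ω ∂P
      ≤ ∫⁻ ω in truncIncrements W (fun j => t (min j N)) k ⁻¹' S,
        sqrtEulerExpProcess κ lam θ v₀ T t W k ω ∂P := by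
  set u := fun j => t (min j N)
  set X := truncIncrements W u k
  set Y := fun ω => W (u (k + 1)) ω - W (u k) ω
  set γ := (κ * lam + θ ^ 2) * expMomentWeight θ T 0
  have htk : 0 ≤ t k := ht.zero ▸ ht.le_of_le (Nat.zero_le k) hk.le
  have htk1 : t (k + 1) ≤ T := ht.last ▸ ht.le_of_le hk le_rfl
  have hY : ∀ ω, Y ω = W (t (k + 1)) ω - W (t k) ω := fun ω => by
    simp only [Y, u, min_eq_left hk.le, min_eq_left (Nat.succ_le_of_lt hk)]
  have hpath : ∀ ω, sqrtEuler κ lam θ v₀ t W k ω = sqrtEulerPath κ lam θ v₀ t (X ω) k :=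
    sqrtEuler_eq_sqrtEulerPath_truncIncrements κ lam θ v₀ t W le_rfl hk.le
  have hlaw : P.map Y = gaussianReal 0 (t (k + 1) - t k).toNNReal := by
    rw [funext hY]
    exact hW.gauss _ _ htk (ht.lt k hk).le
  set F : (ℕ → ℝ) → ℝ → ℝ≥0∞ := fun v y => ENNReal.ofReal (exp (expMomentWeight θ T (t (k + 1))
    * sqrtEulerStep κ lam θ (t (k + 1) - t k) (sqrtEulerPath κ lam θ v₀ t v k) y - γ * t (k + 1)))
  set G : (ℕ → ℝ) → ℝ≥0∞ := fun v => ENNReal.ofReal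
    (exp (expMomentWeight θ T (t k) * sqrtEulerPath κ lam θ v₀ t v k - γ * t k))
  have hpathm := measurable_sqrtEulerPath κ lam θ v₀ t k
  have hF : Measurable fun q : (ℕ → ℝ) × ℝ => F q.1 q.2 := by
    have : Measurable fun q : (ℕ → ℝ) × ℝ => sqrtEulerPath κ lam θ v₀ t q.1 k :=
      hpathm.comp measurable_fst
    simp only [F, sqrtEulerStep]
    fun_prop
  have hG : Measurable G := by simp only [G]; fun_prop
  calc ∫⁻ ω in X ⁻¹' S, sqrtEulerExpProcess κ lam θ v₀ T t W (k + 1) ω ∂P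
      = ∫⁻ ω in X ⁻¹' S, F (X ω) (Y ω) ∂P := by
        refine lintegral_congr fun ω => ?_
        simp only [sqrtEulerExpProcess, F, sqrtEuler_succ, hpath, hY]
        rfl
    _ ≤ ∫⁻ ω in X ⁻¹' S, G (X ω) ∂P :=
        setLIntegral_preimage_le_of_indepFun (measurable_truncIncrements hW.meas u k)
          ((hW.meas _).sub (hW.meas _)) (hW.indepFun_truncIncrements
            (fun i j hij => ht.le_of_le (by omega) (min_le_right _ _)) k) hS hF hG
          fun v _ => hlaw ▸ lintegral_exp_expMomentWeight_sqrtEulerStep_le hκ hν hθ hT htk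
            (ht.lt k hk) htk1 (sqrtEulerPath_nonneg κ lam θ hv₀ t v k)
    _ = ∫⁻ ω in X ⁻¹' S, sqrtEulerExpProcess κ lam θ v₀ T t W k ω ∂P := by
        refine lintegral_congr fun ω => ?_
        simp only [sqrtEulerExpProcess, G, hpath]
        rfl

lemma measure_exists_le_sqrtEuler_le {P : Measure Ω} [IsProbabilityMeasure P]
    {W : ℝ → Ω → ℝ} (hW : IsBrownian P W) {κ lam θ v₀ T : ℝ} {t : ℕ → ℝ} {N : ℕ}
    (ht : IsPartition t N T) (hκ : 0 ≤ κ) (hν : θ ^ 2 / 4 ≤ κ * lam) (hθ : θ ≠ 0) (hT : 0 < T)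
    (hv₀ : 0 ≤ v₀) {x : ℝ} (hx : 0 ≤ x) :
    P {ω | ∃ k ≤ N, x ≤ sqrtEuler κ lam θ v₀ t W k ω}
      ≤ ENNReal.ofReal (exp (expMomentWeight θ T 0 * v₀
          + (κ * lam + θ ^ 2) * expMomentWeight θ T 0 * T)
        * exp (-(expMomentWeight θ T T * x))) := by
  set E : ℕ → Set Ω := fun k => {ω | x ≤ sqrtEuler κ lam θ v₀ t W k ω}
  set γ := (κ * lam + θ ^ 2) * expMomentWeight θ T 0
  set c := ENNReal.ofReal (exp (expMomentWeight θ T T * x - γ * T))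
  have hE : ∀ k, MeasurableSet (E k) := fun k =>
    measurableSet_le measurable_const (measurable_sqrtEuler κ lam θ v₀ t hW.meas k)
  have htT : ∀ k ≤ N, 0 ≤ t k ∧ t k ≤ T := fun k hk =>
    ⟨ht.zero ▸ ht.le_of_le (Nat.zero_le k) hk, ht.last ▸ ht.le_of_le hk le_rfl⟩
  have hγ : 0 ≤ γ := mul_nonneg (by nlinarith [sq_nonneg θ])
    (expMomentWeight_pos hθ (by linarith)).le
  have hcZ : ∀ k ≤ N, ∀ ω ∈ E k, c ≤ sqrtEulerExpProcess κ lam θ v₀ T t W k ω := by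
    intro k hk ω hω
    refine ENNReal.ofReal_le_ofReal (exp_le_exp.mpr ?_)
    obtain ⟨htk0, htkT⟩ := htT k hk
    have hw := expMomentWeight_le_of_le (T := T) (s := t k) hθ (by linarith) htkT
    have := mul_le_mul hw hω hx (expMomentWeight_pos (T := T) (s := t k) hθ (by linarith)).le
    nlinarith
  have hZ : ∀ k < N, ∫⁻ ω in (accumulate E k)ᶜ, sqrtEulerExpProcess κ lam θ v₀ T t W (k + 1) ω ∂P
      ≤ ∫⁻ ω in (accumulate E k)ᶜ, sqrtEulerExpProcess κ lam θ v₀ T t W k ω ∂P := by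
    intro k hk
    have hS : MeasurableSet {v : ℕ → ℝ | ∀ j ≤ k, sqrtEulerPath κ lam θ v₀ t v j < x} := by
      simp only [ofPred_forall]
      exact .iInter fun j => .iInter fun _ =>
        measurableSet_lt (measurable_sqrtEulerPath κ lam θ v₀ t j) measurable_const
    rw [compl_accumulate_le_sqrtEuler_eq_preimage κ lam θ v₀ t W hk.le]
    exact setLIntegral_sqrtEulerExpProcess_succ_le hW ht hκ hν hθ hT hv₀ hk hS
  have hZ0 : ∫⁻ ω, sqrtEulerExpProcess κ lam θ v₀ T t W 0 ω ∂P
      = ENNReal.ofReal (exp (expMomentWeight θ T 0 * v₀)) := by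
    simp [sqrtEulerExpProcess, ht.zero, sqrtEuler]
  have hc0 : c ≠ 0 := (ENNReal.ofReal_pos.mpr (exp_pos _)).ne'
  refine (ENNReal.mul_le_mul_iff_right hc0 ENNReal.ofReal_ne_top).mp ?_
  calc c * P {ω | ∃ k ≤ N, x ≤ sqrtEuler κ lam θ v₀ t W k ω}
      = c * P (accumulate E N) := by congr 2; ext ω; simp [E, mem_accumulate]
    _ ≤ ENNReal.ofReal (exp (expMomentWeight θ T 0 * v₀)) :=
        hZ0 ▸ mul_measure_accumulate_le_lintegral hE hcZ hZ
    _ = _ := by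
        rw [← ENNReal.ofReal_mul (exp_pos _).le, ← exp_add, ← exp_add]
        congr 2
        ring

theorem statement10_general
    {Ω : Type*} [MeasurableSpace Ω] (P : Measure Ω) [IsProbabilityMeasure P]
    (W : ℝ → Ω → ℝ) (hW : IsBrownian P W)
    (κ lam θ v₀ T : ℝ)
    (hκ : 0 < κ) (hθ : 0 < θ) (hv₀ : 0 < v₀) (hT : 0 < T)
    (hFeller : 1 / 2 < 2 * κ * lam / θ ^ 2)
    (p : ℝ) (hp : 1 ≤ p) :
    ∃ C : ℝ, ∀ (N : ℕ) (t : ℕ → ℝ), IsPartition t N T →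
      ∫⁻ ω, ENNReal.ofReal (⨆ k ∈ Finset.range (N + 1), (sqrtEuler κ lam θ v₀ t W k ω) ^ p) ∂P
        ≤ ENNReal.ofReal C := by
  have hν : θ ^ 2 / 4 ≤ κ * lam := by
    rw [lt_div_iff₀ (by positivity)] at hFeller
    linarith
  set K := exp (expMomentWeight θ T 0 * v₀ + (κ * lam + θ ^ 2) * expMomentWeight θ T 0 * T)
  set α := expMomentWeight θ T T
  refine ⟨p * K * ((1 / α) ^ p * Gamma p), fun N t ht => ?_⟩
  have ha0 := sqrtEuler_nonneg κ lam θ hv₀.le t W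
  set M : Ω → ℝ := fun ω =>
    (Finset.range (N + 1)).sup' Finset.nonempty_range_add_one (sqrtEuler κ lam θ v₀ t W · ω)
  have hMtail : ∀ x, 0 < x → P {ω | x ≤ M ω} ≤ ENNReal.ofReal (K * exp (-(α * x))) := by
    intro x hx
    simpa [M, Finset.le_sup'_iff] using
      measure_exists_le_sqrtEuler_le hW ht hκ.le hν hθ.ne' hT hv₀.le hx.le
  calc ∫⁻ ω, ENNReal.ofReal (⨆ k ∈ Finset.range (N + 1), (sqrtEuler κ lam θ v₀ t W k ω) ^ p) ∂P
      ≤ ∫⁻ ω, ENNReal.ofReal (M ω ^ p) ∂P := lintegral_mono fun ω =>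
        ENNReal.ofReal_le_ofReal (iSup_range_rpow_le_rpow_sup' (ha0 · ω) (by linarith) N)
    _ ≤ _ := lintegral_ofReal_rpow_le_of_measure_le_exp
        (fun ω => (ha0 0 ω).trans (Finset.le_sup' (sqrtEuler κ lam θ v₀ t W · ω)
          (Finset.mem_range.mpr N.succ_pos)))
        (Finset.measurable_range_sup'' fun k _ =>
          measurable_sqrtEuler κ lam θ v₀ t hW.meas k).aemeasurable
        (by linarith) (exp_pos _).le (expMomentWeight_pos hθ.ne' (by linarith)) hMtail

/-- under `ν = 2κλ/θ² > 1/2`, for every `p ≥ 1` there is a constant `C`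
(independent of the partition) such that the drift-implicit square-root Euler scheme
satisfies `E[max_{0 ≤ k ≤ N} a_k^p] ≤ C`. -/
theorem statement10
    {Ω : Type*} [MeasurableSpace Ω] (P : Measure Ω) [IsProbabilityMeasure P]
    (W : ℝ → Ω → ℝ) (hW : IsBrownian P W)
    (κ lam θ v₀ T : ℝ)
    (hκ : 0 < κ) (hlam : 0 < lam) (hθ : 0 < θ) (hv₀ : 0 < v₀) (hT : 0 < T)
    (hFeller : 1 / 2 < 2 * κ * lam / θ ^ 2)
    (p : ℝ) (hp : 1 ≤ p) :
    ∃ C : ℝ, ∀ (N : ℕ) (t : ℕ → ℝ), IsPartition t N T →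
      ∫⁻ ω, ENNReal.ofReal (⨆ k ∈ Finset.range (N + 1), (sqrtEuler κ lam θ v₀ t W k ω) ^ p) ∂P
        ≤ ENNReal.ofReal C :=
  statement10_general P W hW κ lam θ v₀ T hκ hθ hv₀ hT hFeller p hp
end
end

section
/- Let θ > 0, c > 0 and p ≥ 1. There exists a constant C depending only on p, θ, c such that for every ξ ≥ 0, every Δ > 0 and every centered Gaussian random variable G with variance Δ, one has E[ ( ξ / ( (√ξ + (θ/2)G)² + cΔ ) )^p ] ≤ C; in particular C does not depend on ξ or Δ. -/
/-!
Write `a = √ξ` and `t = a / θ`. Where `G ≥ -t` the base `a + (θ/2) G` is at least `a / 2`, so the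
ratio is at most `4`; on the lower tail `G < -t` it is at most `ξ / (cΔ)`. The Chernoff bound gives
`P(G ≤ -t) ≤ exp(-ξ / (2θ²Δ))`, and `(ξ / (cΔ))^p exp(-ξ / (2θ²Δ))` is of the form `(k x)^p e^{-x}`
with `k = 2θ²/c`, which is bounded by `(k p)^p` uniformly in `x ≥ 0`.
-/

open MeasureTheory ProbabilityTheory Real Set
open scoped ENNReal NNReal

lemma rpow_mul_exp_neg_le {p x : ℝ} (hp : 0 < p) (hx : 0 ≤ x) :
    x ^ p * exp (-x) ≤ p ^ p := by
  have hlin : x ≤ p * exp (x / p) := by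
    have := mul_le_mul_of_nonneg_left (add_one_le_exp (x / p)) hp.le
    rw [mul_add, mul_one, mul_div_cancel₀ _ hp.ne'] at this
    linarith
  have hpow : (p * exp (x / p)) ^ p = p ^ p * exp x := by
    rw [mul_rpow hp.le (exp_pos _).le, ← exp_mul, div_mul_cancel₀ _ hp.ne']
  calc x ^ p * exp (-x) ≤ (p ^ p * exp x) * exp (-x) := by
        gcongr
        exact hpow ▸ rpow_le_rpow hx hlin hp.le
    _ = p ^ p := by rw [mul_assoc, ← exp_add, add_neg_cancel, exp_zero, mul_one]

lemma gaussianReal_Iic_sub_le (m : ℝ) {v : ℝ≥0} (hv : v ≠ 0) {t : ℝ} (ht : 0 ≤ t) :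
    gaussianReal m v (Iic (m - t)) ≤ ENNReal.ofReal (exp (-t ^ 2 / (2 * v))) := by
  have hv' : (0 : ℝ) < v := by positivity
  have hchernoff := measure_le_le_exp_mul_mgf (X := id) (μ := gaussianReal m v) (m - t)
    (div_nonpos_of_nonpos_of_nonneg (neg_nonpos.mpr ht) hv'.le)
    (integrable_exp_mul_gaussianReal (-t / v))
  rw [mgf_id_gaussianReal, ← exp_add] at hchernoff
  rw [ENNReal.le_ofReal_iff_toReal_le (measure_ne_top _ _) (exp_pos _).le]
  refine hchernoff.trans_eq ?_
  congr 1
  field_simp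
  ring

lemma div_sq_add_le_four {a y d : ℝ} (ha : 0 ≤ a) (hy : a / 2 ≤ y) (hd : 0 < d) :
    a ^ 2 / (y ^ 2 + d) ≤ 4 := by
  rw [div_le_iff₀ (by positivity)]
  nlinarith [pow_le_pow_left₀ (by positivity) hy 2]

lemma ofReal_ratio_rpow_le_add_indicator {ξ θ d p : ℝ} (hξ : 0 ≤ ξ) (hθ : 0 < θ) (hd : 0 < d)
    (hp : 0 ≤ p) (x : ℝ) :
    ENNReal.ofReal ((ξ / ((√ξ + (θ / 2) * x) ^ 2 + d)) ^ p) ≤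
      ENNReal.ofReal (4 ^ p) +
        (Iic (-(√ξ / θ))).indicator (fun _ => ENNReal.ofReal ((ξ / d) ^ p)) x := by
  have hratio_nonneg : 0 ≤ ξ / ((√ξ + (θ / 2) * x) ^ 2 + d) := by positivity
  by_cases hx : x ∈ Iic (-(√ξ / θ))
  · rw [indicator_of_mem hx]
    refine le_add_left (ENNReal.ofReal_le_ofReal (rpow_le_rpow hratio_nonneg ?_ hp))
    exact div_le_div_of_nonneg_left hξ hd (le_add_of_nonneg_left (sq_nonneg _))
  · rw [indicator_of_notMem hx, add_zero]
    refine ENNReal.ofReal_le_ofReal (rpow_le_rpow hratio_nonneg ?_ hp)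
    have hbase : √ξ / 2 ≤ √ξ + (θ / 2) * x := by
      have : -(√ξ / θ) ≤ x := (not_le.mp hx).le
      have hθt : (θ / 2) * (√ξ / θ) = √ξ / 2 := by field_simp
      nlinarith
    simpa [sq_sqrt hξ] using div_sq_add_le_four (sqrt_nonneg ξ) hbase hd

lemma rpow_div_mul_exp_neg_le {ξ θ c Δ p : ℝ} (hξ : 0 ≤ ξ) (hθ : 0 < θ) (hc : 0 < c)
    (hΔ : 0 < Δ) (hp : 0 < p) :
    (ξ / (c * Δ)) ^ p * exp (-(√ξ / θ) ^ 2 / (2 * Δ)) ≤ (2 * θ ^ 2 * p / c) ^ p := by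
  set x := ξ / (2 * θ ^ 2 * Δ) with hx_def
  have hx : 0 ≤ x := by positivity
  have hexp : -(√ξ / θ) ^ 2 / (2 * Δ) = -x := by
    rw [div_pow, sq_sqrt hξ, hx_def]; field_simp
  have hbase : ξ / (c * Δ) = 2 * θ ^ 2 / c * x := by rw [hx_def]; field_simp
  rw [hexp, hbase, mul_rpow (by positivity) hx, mul_assoc,
    show 2 * θ ^ 2 * p / c = 2 * θ ^ 2 / c * p by ring, mul_rpow (by positivity) hp.le]
  gcongr
  exact rpow_mul_exp_neg_le hp hx

/-- for `θ > 0`, `c > 0` and `p ≥ 1` there is a constant `C` depending only on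
`p, θ, c` such that for every `ξ ≥ 0`, every `Δ > 0` and every centered Gaussian random
variable `G` with variance `Δ`, one has `E[(ξ/((√ξ + (θ/2)G)² + cΔ))^p] ≤ C`. -/
theorem statement19 (θ c p : ℝ) (hθ : 0 < θ) (hc : 0 < c) (hp : 1 ≤ p) :
    ∃ C : ℝ, ∀ (ξ Δ : ℝ), 0 ≤ ξ → 0 < Δ →
      ∀ (Ω : Type) [MeasurableSpace Ω] (P : Measure Ω), IsProbabilityMeasure P →
        ∀ G : Ω → ℝ, Measure.map G P = gaussianReal 0 (Real.toNNReal Δ) →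
          ∫⁻ ω, ENNReal.ofReal
              ((ξ / ((Real.sqrt ξ + (θ / 2) * G ω) ^ 2 + c * Δ)) ^ p) ∂P
            ≤ ENNReal.ofReal C := by
  have hp0 : 0 < p := by linarith
  refine ⟨4 ^ p + (2 * θ ^ 2 * p / c) ^ p, fun ξ Δ hξ hΔ Ω _ P _ G hG => ?_⟩
  set t := √ξ / θ
  set R := (ξ / (c * Δ)) ^ p
  have hG_meas : AEMeasurable G P :=
    .of_map_ne_zero (by rw [hG]; exact IsProbabilityMeasure.ne_zero _)
  have htail : P (G ⁻¹' Iic (-t)) ≤ ENNReal.ofReal (exp (-t ^ 2 / (2 * Δ))) := by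
    rw [← Measure.map_apply_of_aemeasurable hG_meas measurableSet_Iic, hG]
    simpa [hΔ.le] using
      gaussianReal_Iic_sub_le 0 (v := Δ.toNNReal) (by simpa using hΔ) (by positivity : 0 ≤ t)
  calc ∫⁻ ω, ENNReal.ofReal ((ξ / ((√ξ + (θ / 2) * G ω) ^ 2 + c * Δ)) ^ p) ∂P
      ≤ ∫⁻ ω, ENNReal.ofReal (4 ^ p) +
          (G ⁻¹' Iic (-t)).indicator (fun _ => ENNReal.ofReal R) ω ∂P :=
        lintegral_mono fun ω =>
          ofReal_ratio_rpow_le_add_indicator hξ hθ (by positivity) hp0.le (G ω)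
    _ ≤ ENNReal.ofReal (4 ^ p) + ENNReal.ofReal R * P (G ⁻¹' Iic (-t)) := by
        rw [lintegral_add_left measurable_const, lintegral_const, measure_univ, mul_one]
        gcongr
        exact lintegral_indicator_const_le _ _
    _ ≤ ENNReal.ofReal (4 ^ p) + ENNReal.ofReal R * ENNReal.ofReal (exp (-t ^ 2 / (2 * Δ))) := by
        gcongr
    _ ≤ ENNReal.ofReal (4 ^ p + (2 * θ ^ 2 * p / c) ^ p) := by
        rw [← ENNReal.ofReal_mul (by positivity), ← ENNReal.ofReal_add (by positivity)
          (by positivity)]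
        gcongr
        exact rpow_div_mul_exp_neg_le hξ hθ hc hΔ hp0
end
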